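/- arXiv:0803.4382 — 9 statements merged into one kernel-verified Lean document; each statement's English description precedes it below -/
import Mathlib

section
/- Let Γ be a positive monoid (i.e., γ₁γ₂ = ε implies γ₁ = ε and γ₂ = ε) and A a Γ-graded algebra with unity in A_ε. If m is a maximal graded left ideal of A, then m = m_ε ⊕ ⨁_{γ≠ε} A_γ, where m_ε = m ∩ A_ε is a maximal left ideal of A_ε. -/
/-!
Positivity of the grading makes the degree-`ε` projection `π₀ : A → A_ε` multiplicative, since
`(ab)_ε = ∑_{γ₁γ₂ = ε} a_{γ₁} b_{γ₂} = a_ε b_ε`. Hence for every proper left ideal `n` of `A_ε`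
the preimage `π₀⁻¹(n)` is a proper graded left ideal of `A`, and it contains `m` as soon as `n`
contains `m_ε`. Maximality of `m` then forces `π₀⁻¹(n) = m`. With `n = m_ε` this shows that `m`
contains every `A_γ` with `γ ≠ ε`; for a general `n ⊇ m_ε` it gives `n ⊆ m`, i.e. `n = m_ε`.
-/

open DirectSum

namespace GradedRing

variable {ι σ A : Type*} [DecidableEq ι] [AddMonoid ι] [Semiring A] [SetLike σ A]
  [AddSubmonoidClass σ A] (𝒜 : ι → σ) [GradedRing 𝒜]
  (hpos : ∀ i j : ι, i + j = 0 → i = 0 ∧ j = 0)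

include hpos in
theorem coe_decompose_mul_zero_of_pos (a b : A) :
    (decompose 𝒜 (a * b) 0 : A) = decompose 𝒜 a 0 * decompose 𝒜 b 0 := by
  induction a using DirectSum.Decomposition.inductionOn 𝒜 with
  | zero => simp
  | @homogeneous i a =>
    obtain ⟨a, ha⟩ := a
    by_cases hi : i = 0
    · subst hi
      rw [coe_decompose_mul_of_left_mem_zero 𝒜 ha, decompose_of_mem_same 𝒜 ha]
    · rw [decompose_of_mem_ne 𝒜 ha hi, zero_mul]
      induction b using DirectSum.Decomposition.inductionOn 𝒜 with
      | zero => simp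
      | @homogeneous j b =>
        exact decompose_of_mem_ne 𝒜 (SetLike.GradedMul.mul_mem ha b.2)
          fun h => hi (hpos i j h).1
      | add b c hb hc =>
        simp only [mul_add, decompose_add, DirectSum.add_apply, AddMemClass.coe_add, hb, hc,
          add_zero]
  | add a a' ha ha' =>
    simp only [add_mul, decompose_add, DirectSum.add_apply, AddMemClass.coe_add, ha, ha']

def degreeZeroComap (n : AddSubmonoid A) (hn : ∀ a ∈ 𝒜 0, ∀ x ∈ n, a * x ∈ n) : Ideal A where
  carrier := {x | (decompose 𝒜 x 0 : A) ∈ n}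
  zero_mem' := by simp [n.zero_mem]
  add_mem' {x y} hx hy := by
    simpa only [Set.mem_ofPred_eq, decompose_add, DirectSum.add_apply, AddMemClass.coe_add] using
      n.add_mem hx hy
  smul_mem' c x hx := by
    simpa only [Set.mem_ofPred_eq, smul_eq_mul, coe_decompose_mul_zero_of_pos 𝒜 hpos] using
      hn _ (SetLike.coe_mem _) _ hx

variable {𝒜 hpos} {n : AddSubmonoid A} {hn : ∀ a ∈ 𝒜 0, ∀ x ∈ n, a * x ∈ n}

theorem mem_degreeZeroComap {x : A} :
    x ∈ degreeZeroComap 𝒜 hpos n hn ↔ (decompose 𝒜 x 0 : A) ∈ n :=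
  Iff.rfl

theorem isHomogeneous_degreeZeroComap : (degreeZeroComap 𝒜 hpos n hn).IsHomogeneous 𝒜 := by
  intro i x hx
  rw [mem_degreeZeroComap]
  by_cases hi : i = 0
  · subst hi
    rw [decompose_of_mem_same 𝒜 (SetLike.coe_mem _)]
    exact hx
  · rw [decompose_of_mem_ne 𝒜 (SetLike.coe_mem _) hi]
    exact n.zero_mem

theorem one_notMem_degreeZeroComap (h1 : (1 : A) ∉ n) : (1 : A) ∉ degreeZeroComap 𝒜 hpos n hn := by
  rwa [mem_degreeZeroComap, decompose_of_mem_same 𝒜 SetLike.GradedOne.one_mem]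

theorem le_degreeZeroComap {I : Ideal A} (hI : I.IsHomogeneous 𝒜)
    (hIn : ∀ x ∈ I, x ∈ 𝒜 0 → x ∈ n) : I ≤ degreeZeroComap 𝒜 hpos n hn :=
  fun _ hx => hIn _ (hI 0 hx) (SetLike.coe_mem _)

theorem degreeZeroComap_eq_of_isMaximalHomogeneous {m : Ideal A} (hm : m.IsHomogeneous 𝒜)
    (hmax : ∀ I : Ideal A, I.IsHomogeneous 𝒜 → m < I → I = ⊤)
    (h1 : (1 : A) ∉ n) (hmn : ∀ x ∈ m, x ∈ 𝒜 0 → x ∈ n) :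
    degreeZeroComap 𝒜 hpos n hn = m := by
  by_contra hne
  have hlt : m < degreeZeroComap 𝒜 hpos n hn :=
    lt_of_le_of_ne (le_degreeZeroComap hm hmn) (Ne.symm hne)
  have htop := hmax _ isHomogeneous_degreeZeroComap hlt
  exact one_notMem_degreeZeroComap h1 (htop ▸ Submodule.mem_top)

end GradedRing

open GradedRing

/-- A maximal graded left ideal of a positively graded algebra decomposes as
`m = m_ε ⊕ ⨁_{γ ≠ ε} A_γ`, with `m_ε = m ∩ A_ε` a maximal left ideal of `A_ε`. -/
theorem stmt0 {K : Type*} [Field K] {Γ : Type*} [AddMonoid Γ] [DecidableEq Γ]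
    {A : Type*} [Ring A] [Algebra K A] (𝒜 : Γ → Submodule K A) [GradedAlgebra 𝒜]
    (hpos : ∀ γ₁ γ₂ : Γ, γ₁ + γ₂ = 0 → γ₁ = 0 ∧ γ₂ = 0)
    (m : Ideal A) (hgr : m.IsHomogeneous 𝒜)
    (hproper : m ≠ ⊤)
    (hmax : ∀ I : Ideal A, I.IsHomogeneous 𝒜 → m < I → I = ⊤) :
    -- `m` contains every component of degree ≠ ε, so `m = (m ∩ A_ε) ⊕ ⨁_{γ ≠ ε} A_γ`
    (∀ γ : Γ, γ ≠ 0 → (𝒜 γ : Set A) ⊆ (m : Set A)) ∧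
    -- `m_ε = m ∩ A_ε` is a proper left ideal of `A_ε` ...
    (1 : A) ∉ (m.restrictScalars K ⊓ 𝒜 0) ∧
    -- ... which is maximal among proper left ideals of `A_ε`
    (∀ n : Submodule K A, n ≤ 𝒜 0 → (∀ a ∈ 𝒜 0, ∀ x ∈ n, a * x ∈ n) →
      (1 : A) ∉ n → (m.restrictScalars K ⊓ 𝒜 0) ≤ n →
      n = m.restrictScalars K ⊓ 𝒜 0) := by
  have h1m : (1 : A) ∉ m.restrictScalars K ⊓ 𝒜 0 :=
    fun h => hproper ((Ideal.eq_top_iff_one m).2 h.1)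
  refine ⟨fun γ hγ x hx => ?_, h1m, fun n hn0 hn h1n hmn => ?_⟩
  · have hm₀ : ∀ a ∈ 𝒜 0, ∀ x ∈ m.restrictScalars K ⊓ 𝒜 0, a * x ∈ m.restrictScalars K ⊓ 𝒜 0 :=
      fun a ha x hx => ⟨m.mul_mem_left a hx.1, by simpa using SetLike.GradedMul.mul_mem ha hx.2⟩
    have hx₀ : x ∈ degreeZeroComap 𝒜 hpos _ hm₀ := by
      rw [mem_degreeZeroComap, decompose_of_mem_ne 𝒜 hx hγ]
      exact zero_mem _
    rwa [degreeZeroComap_eq_of_isMaximalHomogeneous hgr hmax h1m fun x hx hx₀ => ⟨hx, hx₀⟩] at hx₀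
  · refine le_antisymm (fun x hx => ⟨?_, hn0 hx⟩) hmn
    have hx₀ : x ∈ degreeZeroComap 𝒜 hpos _ hn := by
      rwa [mem_degreeZeroComap, decompose_of_mem_same 𝒜 (hn0 hx)]
    rwa [degreeZeroComap_eq_of_isMaximalHomogeneous hgr hmax h1n fun x hx hx₀ => hmn ⟨hx, hx₀⟩]
      at hx₀
end

section
/- Let Γ be a positive monoid and A a Γ-graded algebra. Then every maximal graded left ideal of A is a maximal left ideal of A in the ungraded sense. -/
/-!
Positivity of `Γ` means that `r * b` has no degree-`0` component whenever `b` is homogeneous of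
nonzero degree. If such a `b` were outside the maximal graded left ideal `m`, maximality would give
`1 = x + r * b` with `x ∈ m`, and taking degree-`0` parts would give `1 = x₀ ∈ m`. Hence `m`
contains every homogeneous element of nonzero degree, so `a - a₀ ∈ m` for every `a`. For a left
ideal `I ⊋ m` pick `a ∈ I \ m`: then `a₀ ∈ I \ m`, and `m + A a₀` is a graded left ideal strictly
containing `m`, so `I ⊇ m + A a₀ = A`.
-/

open DirectSum

section Semiring

variable {ι σ A : Type*} [DecidableEq ι] [AddMonoid ι] [Semiring A] [SetLike σ A]
  [AddSubmonoidClass σ A] {𝒜 : ι → σ} [GradedRing 𝒜]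

theorem coe_decompose_mul_of_right_mem_zero (hpos : ∀ i j : ι, i + j = 0 → i = 0 ∧ j = 0)
    {i : ι} (hi : i ≠ 0) {b : A} (hb : b ∈ 𝒜 i) (r : A) :
    (decompose 𝒜 (r * b) 0 : A) = 0 := by
  induction r using DirectSum.Decomposition.inductionOn 𝒜 with
  | zero => simp
  | @homogeneous j x =>
    exact decompose_of_mem_ne 𝒜 (SetLike.mul_mem_graded x.2 hb) fun h => hi (hpos j i h).2
  | add u v hu hv =>
    rw [add_mul, decompose_add, DirectSum.add_apply, AddMemClass.coe_add, hu, hv, add_zero]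

namespace Ideal.IsHomogeneous

variable {m : Ideal A}

theorem sup_span_singleton_eq_top (hm : m.IsHomogeneous 𝒜)
    (hmax : ∀ I : Ideal A, I.IsHomogeneous 𝒜 → m < I → I = ⊤)
    {i : ι} {b : A} (hb : b ∈ 𝒜 i) (hbm : b ∉ m) : m ⊔ span {b} = ⊤ := by
  have hspan : (span {b}).IsHomogeneous 𝒜 :=
    homogeneous_span 𝒜 {b} (by rintro x rfl; exact ⟨i, hb⟩)
  refine hmax _ (hm.sup hspan) (lt_of_le_of_ne le_sup_left fun h => hbm ?_)
  exact h ▸ Submodule.mem_sup_right (subset_span rfl)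

theorem eq_top_of_sup_span_singleton_eq_top (hm : m.IsHomogeneous 𝒜)
    (hpos : ∀ i j : ι, i + j = 0 → i = 0 ∧ j = 0)
    {i : ι} (hi : i ≠ 0) {b : A} (hb : b ∈ 𝒜 i) (htop : m ⊔ span {b} = ⊤) : m = ⊤ := by
  obtain ⟨x, hx, y, hy, hxy⟩ := Submodule.mem_sup.mp (htop ▸ Submodule.mem_top : (1 : A) ∈ _)
  obtain ⟨r, rfl⟩ := mem_span_singleton'.mp hy
  have hone : (decompose 𝒜 (x + r * b) 0 : A) = 1 := by
    rw [hxy]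
    exact decompose_of_mem_same 𝒜 SetLike.GradedOne.one_mem
  rw [decompose_add, DirectSum.add_apply, AddMemClass.coe_add,
    coe_decompose_mul_of_right_mem_zero hpos hi hb, add_zero] at hone
  exact (eq_top_iff_one m).mpr (hone ▸ hm 0 hx)

theorem mem_of_mem_graded_of_ne_zero (hm : m.IsHomogeneous 𝒜)
    (hpos : ∀ i j : ι, i + j = 0 → i = 0 ∧ j = 0)
    (hproper : m ≠ ⊤) (hmax : ∀ I : Ideal A, I.IsHomogeneous 𝒜 → m < I → I = ⊤)
    {i : ι} (hi : i ≠ 0) {b : A} (hb : b ∈ 𝒜 i) : b ∈ m := by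
  by_contra hbm
  exact hproper <| hm.eq_top_of_sup_span_singleton_eq_top hpos hi hb <|
    hm.sup_span_singleton_eq_top hmax hb hbm

end Ideal.IsHomogeneous

end Semiring

theorem Ideal.IsHomogeneous.sub_coe_decompose_zero_mem {ι σ A : Type*} [DecidableEq ι]
    [AddMonoid ι] [Ring A] [SetLike σ A] [AddSubgroupClass σ A] {𝒜 : ι → σ} [GradedRing 𝒜]
    {m : Ideal A} (hm : m.IsHomogeneous 𝒜) (h : ∀ i ≠ 0, ∀ b ∈ 𝒜 i, b ∈ m) (a : A) :
    a - decompose 𝒜 a 0 ∈ m := by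
  refine hm.mem_iff.mpr fun i => ?_
  rw [decompose_sub, DirectSum.sub_apply, AddSubgroupClass.coe_sub]
  by_cases hi : i = 0
  · subst hi
    rw [decompose_of_mem_same 𝒜 (decompose 𝒜 a 0).2, sub_self]
    exact m.zero_mem
  · rw [decompose_of_mem_ne 𝒜 (decompose 𝒜 a 0).2 (Ne.symm hi), sub_zero]
    exact h i hi _ (decompose 𝒜 a i).2

/-- Over a positive monoid, every maximal graded left ideal of a graded algebra
is a maximal left ideal in the ungraded sense. -/
theorem stmt1 {K : Type*} [Field K] {Γ : Type*} [AddMonoid Γ] [DecidableEq Γ]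
    {A : Type*} [Ring A] [Algebra K A] (𝒜 : Γ → Submodule K A) [GradedAlgebra 𝒜]
    (hpos : ∀ γ₁ γ₂ : Γ, γ₁ + γ₂ = 0 → γ₁ = 0 ∧ γ₂ = 0)
    (m : Ideal A) (hgr : m.IsHomogeneous 𝒜)
    (hproper : m ≠ ⊤)
    (hmax : ∀ I : Ideal A, I.IsHomogeneous 𝒜 → m < I → I = ⊤) :
    m.IsMaximal := by
  refine ⟨⟨hproper, fun I hI => ?_⟩⟩
  obtain ⟨a, haI, ham⟩ := SetLike.exists_of_lt hI
  have hrest : a - decompose 𝒜 a 0 ∈ m := hgr.sub_coe_decompose_zero_mem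
    (fun i hi _ hb => hgr.mem_of_mem_graded_of_ne_zero hpos hproper hmax hi hb) a
  have ha₀m : (decompose 𝒜 a 0 : A) ∉ m := fun h => ham (by simpa using m.add_mem hrest h)
  have ha₀I : (decompose 𝒜 a 0 : A) ∈ I := by simpa using I.sub_mem haI (hI.le hrest)
  rw [eq_top_iff, ← hgr.sup_span_singleton_eq_top hmax (decompose 𝒜 a 0).2 ha₀m]
  exact sup_le hI.le ((Ideal.span_singleton_le_iff_mem I).mpr ha₀I)
end

section
/- Let Γ be a positive monoid and A a Γ-graded algebra. Then the graded radical of A (the intersection of all maximal graded left ideals) equals Rad(A_ε) ⊕ ⨁_{γ≠ε} A_γ, where Rad(A_ε) is the Jacobson radical of the subalgebra A_ε. -/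
/-- `n` is a maximal left ideal of the degree-zero subalgebra `𝒜 0`
(formulated as a `K`-submodule of `A` contained in `𝒜 0`, closed under left
multiplication by `𝒜 0`, proper, and maximal among such). -/
def IsMaxLeftIdealOfDegZero {K : Type*} [Field K]
    {A : Type*} [Ring A] [Algebra K A] (𝒜0 : Submodule K A)
    (n : Submodule K A) : Prop :=
  n ≤ 𝒜0 ∧ (∀ a ∈ 𝒜0, ∀ x ∈ n, a * x ∈ n) ∧ (1 : A) ∉ n ∧
    ∀ n' : Submodule K A, n' ≤ 𝒜0 → (∀ a ∈ 𝒜0, ∀ x ∈ n', a * x ∈ n') →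
      (1 : A) ∉ n' → n ≤ n' → n' = n


/-!
Write `x₀` for the degree-zero component of `x`. Positivity of the grading monoid makes
`x ↦ x₀` multiplicative, so for every left ideal `n` of `A_ε` the set `{x | x₀ ∈ n}` is a graded
left ideal; it equals `n ⊕ ⨁_{γ ≠ ε} A_γ`. Conversely every graded left ideal `m` is contained in
the one built from its degree-zero part `m ∩ A_ε`. Hence `n ↦ {x | x₀ ∈ n}` and `m ↦ m ∩ A_ε`
are mutually inverse bijections between maximal left ideals of `A_ε` and maximal graded left
ideals of `A`, and intersecting over them gives the formula.
-/

open DirectSum GradedAlgebra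

section

variable {K : Type*} [Field K] {Γ : Type*} [AddMonoid Γ] [DecidableEq Γ]
  {A : Type*} [Ring A] [Algebra K A] (𝒜 : Γ → Submodule K A) [GradedAlgebra 𝒜]

theorem proj_zero_mem (x : A) : proj 𝒜 0 x ∈ 𝒜 0 :=
  SetLike.coe_mem _

theorem proj_zero_of_mem {x : A} (hx : x ∈ 𝒜 0) : proj 𝒜 0 x = x :=
  decompose_of_mem_same 𝒜 hx

theorem proj_zero_proj (i : Γ) (x : A) :
    proj 𝒜 0 (proj 𝒜 i x) = if i = 0 then proj 𝒜 0 x else 0 := by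
  split_ifs with hi
  · subst hi
    exact proj_zero_of_mem 𝒜 (proj_zero_mem 𝒜 x)
  · exact decompose_of_mem_ne 𝒜 (SetLike.coe_mem _) hi

theorem proj_zero_mul (hpos : ∀ γ₁ γ₂ : Γ, γ₁ + γ₂ = 0 → γ₁ = 0 ∧ γ₂ = 0) (a b : A) :
    proj 𝒜 0 (a * b) = proj 𝒜 0 a * proj 𝒜 0 b := by
  induction a using DirectSum.Decomposition.inductionOn 𝒜 with
  | zero => simp
  | add a a' ha ha' => simp only [add_mul, map_add, ha, ha']
  | @homogeneous i a =>
    obtain ⟨a, hai⟩ := a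
    induction b using DirectSum.Decomposition.inductionOn 𝒜 with
    | zero => simp
    | add b b' hb hb' => simp only [mul_add, map_add, hb, hb']
    | @homogeneous j b =>
      obtain ⟨b, hbj⟩ := b
      have hab := SetLike.mul_mem_graded hai hbj
      by_cases h : i + j = 0
      · obtain ⟨rfl, rfl⟩ := hpos i j h
        rw [proj_zero_of_mem 𝒜 hai, proj_zero_of_mem 𝒜 hbj,
          proj_zero_of_mem 𝒜 (by rwa [add_zero] at hab)]
      · rw [show proj 𝒜 0 (a * b) = 0 from decompose_of_mem_ne 𝒜 hab h]
        by_cases hi : i = 0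
        · subst hi
          rw [zero_add] at h
          rw [show proj 𝒜 0 b = 0 from decompose_of_mem_ne 𝒜 hbj h, mul_zero]
        · rw [show proj 𝒜 0 a = 0 from decompose_of_mem_ne 𝒜 hai hi, zero_mul]

theorem iSup_ne_zero_eq_ker_proj_zero :
    (⨆ γ : Γ, ⨆ _ : γ ≠ 0, 𝒜 γ) = LinearMap.ker (proj 𝒜 0) := by
  refine le_antisymm (iSup₂_le fun γ hγ x hx => decompose_of_mem_ne 𝒜 hx hγ) fun x hx => ?_
  classical
  rw [← sum_support_decompose 𝒜 x]
  refine Submodule.sum_mem _ fun i _ => ?_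
  by_cases hi : i = 0
  · subst hi
    rw [show (decompose 𝒜 x 0 : A) = 0 from hx]
    exact zero_mem _
  · exact Submodule.mem_iSup_of_mem i (Submodule.mem_iSup_of_mem hi (SetLike.coe_mem _))

theorem sub_proj_zero_mem_ker (x : A) : x - proj 𝒜 0 x ∈ LinearMap.ker (proj 𝒜 0) := by
  rw [LinearMap.mem_ker, map_sub, proj_zero_of_mem 𝒜 (proj_zero_mem 𝒜 x), sub_self]

theorem mul_mem_restrictScalars_inf_zero (m : Ideal A) {a x : A} (ha : a ∈ 𝒜 0)
    (hx : x ∈ m.restrictScalars K ⊓ 𝒜 0) : a * x ∈ m.restrictScalars K ⊓ 𝒜 0 :=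
  ⟨m.mul_mem_left a hx.1, add_zero (0 : Γ) ▸ SetLike.mul_mem_graded ha hx.2⟩

theorem proj_zero_mem_of_isHomogeneous {m : Ideal A} (hm : m.IsHomogeneous 𝒜) {x : A}
    (hx : x ∈ m) : proj 𝒜 0 x ∈ m.restrictScalars K ⊓ 𝒜 0 :=
  ⟨hm 0 hx, proj_zero_mem 𝒜 x⟩

def comapProjZero (hpos : ∀ γ₁ γ₂ : Γ, γ₁ + γ₂ = 0 → γ₁ = 0 ∧ γ₂ = 0) (n : Submodule K A)
    (hn : ∀ a ∈ 𝒜 0, ∀ x ∈ n, a * x ∈ n) : Ideal A :=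
  { (n.comap (proj 𝒜 0)).toAddSubmonoid with
    smul_mem' := fun a x hx => by
      change proj 𝒜 0 (a * x) ∈ n
      rw [proj_zero_mul 𝒜 hpos]
      exact hn _ (proj_zero_mem 𝒜 a) _ hx }

variable {𝒜} (hpos : ∀ γ₁ γ₂ : Γ, γ₁ + γ₂ = 0 → γ₁ = 0 ∧ γ₂ = 0) {n : Submodule K A}
  (hn : ∀ a ∈ 𝒜 0, ∀ x ∈ n, a * x ∈ n)

@[simp]
theorem mem_comapProjZero {x : A} : x ∈ comapProjZero 𝒜 hpos n hn ↔ proj 𝒜 0 x ∈ n :=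
  Iff.rfl

theorem isHomogeneous_comapProjZero : (comapProjZero 𝒜 hpos n hn).IsHomogeneous 𝒜 := by
  intro i x hx
  change proj 𝒜 0 (proj 𝒜 i x) ∈ n
  rw [proj_zero_proj]
  split_ifs
  exacts [hx, zero_mem n]

theorem one_mem_comapProjZero_iff : (1 : A) ∈ comapProjZero 𝒜 hpos n hn ↔ (1 : A) ∈ n := by
  rw [mem_comapProjZero, proj_zero_of_mem 𝒜 SetLike.GradedOne.one_mem]

theorem le_restrictScalars_comapProjZero (hn0 : n ≤ 𝒜 0) :
    n ≤ (comapProjZero 𝒜 hpos n hn).restrictScalars K :=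
  fun x hx => by
    rw [Submodule.restrictScalars_mem, mem_comapProjZero, proj_zero_of_mem 𝒜 (hn0 hx)]
    exact hx

theorem ker_proj_zero_le_comapProjZero :
    LinearMap.ker (proj 𝒜 0) ≤ (comapProjZero 𝒜 hpos n hn).restrictScalars K :=
  fun x hx => by
    rw [Submodule.restrictScalars_mem, mem_comapProjZero, LinearMap.mem_ker.1 hx]
    exact zero_mem n

theorem Ideal.IsHomogeneous.le_comapProjZero {m : Ideal A} (hm : m.IsHomogeneous 𝒜) :
    m ≤ comapProjZero 𝒜 hpos _ fun _ ha _ => mul_mem_restrictScalars_inf_zero 𝒜 m ha :=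
  fun _ hx => proj_zero_mem_of_isHomogeneous 𝒜 hm hx

end

section

variable {K : Type*} [Field K] {Γ : Type*} [AddMonoid Γ] [DecidableEq Γ]
  {A : Type*} [Ring A] [Algebra K A] {𝒜 : Γ → Submodule K A} [GradedAlgebra 𝒜]
  (hpos : ∀ γ₁ γ₂ : Γ, γ₁ + γ₂ = 0 → γ₁ = 0 ∧ γ₂ = 0)

variable (𝒜) in
def IsMaximalHomogeneous (m : Ideal A) : Prop :=
  m.IsHomogeneous 𝒜 ∧ m ≠ ⊤ ∧ ∀ I : Ideal A, I.IsHomogeneous 𝒜 → m < I → I = ⊤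

theorem IsMaximalHomogeneous.eq_of_le {m I : Ideal A} (hm : IsMaximalHomogeneous 𝒜 m)
    (hI : I.IsHomogeneous 𝒜) (h1 : (1 : A) ∉ I) (hle : m ≤ I) : m = I := by
  by_contra hne
  exact h1 ((hm.2.2 I hI (lt_of_le_of_ne hle hne)).symm ▸ Submodule.mem_top)

theorem IsMaximalHomogeneous.eq_comapProjZero {m : Ideal A} (hm : IsMaximalHomogeneous 𝒜 m) :
    m = comapProjZero 𝒜 hpos _ fun _ ha _ => mul_mem_restrictScalars_inf_zero 𝒜 m ha := by
  refine hm.eq_of_le (isHomogeneous_comapProjZero hpos _) (fun h1 => ?_)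
    (hm.1.le_comapProjZero hpos)
  exact hm.2.1 ((Ideal.eq_top_iff_one m).2 ((one_mem_comapProjZero_iff hpos _).1 h1).1)

include hpos in
theorem IsMaximalHomogeneous.ker_proj_zero_le {m : Ideal A} (hm : IsMaximalHomogeneous 𝒜 m) :
    LinearMap.ker (proj 𝒜 0) ≤ m.restrictScalars K := by
  rw [hm.eq_comapProjZero hpos]
  exact ker_proj_zero_le_comapProjZero hpos _

include hpos in
theorem IsMaximalHomogeneous.isMaxLeftIdealOfDegZero {m : Ideal A}
    (hm : IsMaximalHomogeneous 𝒜 m) :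
    IsMaxLeftIdealOfDegZero (𝒜 0) (m.restrictScalars K ⊓ 𝒜 0) := by
  refine ⟨inf_le_right, fun a ha x hx => mul_mem_restrictScalars_inf_zero 𝒜 m ha hx,
    fun h1 => hm.2.1 ((Ideal.eq_top_iff_one m).2 h1.1), fun n h0 hn h1 hle => ?_⟩
  have hmI : m = comapProjZero 𝒜 hpos n hn :=
    hm.eq_of_le (isHomogeneous_comapProjZero hpos hn)
      (fun h => h1 ((one_mem_comapProjZero_iff hpos hn).1 h))
      ((hm.1.le_comapProjZero hpos).trans fun x hx => hle hx)
  refine le_antisymm (fun x hx => ⟨?_, h0 hx⟩) hle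
  rw [hmI]
  exact le_restrictScalars_comapProjZero hpos hn h0 hx

theorem isMaximalHomogeneous_comapProjZero {n : Submodule K A}
    (hn : IsMaxLeftIdealOfDegZero (𝒜 0) n) :
    IsMaximalHomogeneous 𝒜 (comapProjZero 𝒜 hpos n hn.2.1) := by
  obtain ⟨h0, hmul, h1, hmax⟩ := hn
  refine ⟨isHomogeneous_comapProjZero hpos hmul,
    fun htop => h1 ((one_mem_comapProjZero_iff hpos hmul).1 (htop ▸ Submodule.mem_top)),
    fun I hI hlt => (Ideal.eq_top_iff_one I).2 (by_contra fun h1I => ?_)⟩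
  have hnI : I.restrictScalars K ⊓ 𝒜 0 = n :=
    hmax _ inf_le_right (fun a ha x hx => mul_mem_restrictScalars_inf_zero 𝒜 I ha hx)
      (fun h => h1I h.1) fun x hx =>
        ⟨hlt.le (le_restrictScalars_comapProjZero hpos hmul h0 hx), h0 hx⟩
  refine hlt.not_ge fun x hx => ?_
  rw [mem_comapProjZero, ← hnI]
  exact proj_zero_mem_of_isHomogeneous 𝒜 hI hx

end

/-- Over a positive monoid, the graded radical (the intersection of all maximal graded
left ideals) equals `Rad(A_ε) ⊕ ⨁_{γ ≠ ε} A_γ`. -/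
theorem stmt2 {K : Type*} [Field K] {Γ : Type*} [AddMonoid Γ] [DecidableEq Γ]
    {A : Type*} [Ring A] [Algebra K A] (𝒜 : Γ → Submodule K A) [GradedAlgebra 𝒜]
    (hpos : ∀ γ₁ γ₂ : Γ, γ₁ + γ₂ = 0 → γ₁ = 0 ∧ γ₂ = 0) :
    (sInf {m : Ideal A | m.IsHomogeneous 𝒜 ∧ m ≠ ⊤ ∧
        ∀ I : Ideal A, I.IsHomogeneous 𝒜 → m < I → I = ⊤}).restrictScalars K =
      sInf {n : Submodule K A | IsMaxLeftIdealOfDegZero (𝒜 0) n} ⊔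
        (⨆ γ : Γ, ⨆ _ : γ ≠ 0, 𝒜 γ) := by
  rw [iSup_ne_zero_eq_ker_proj_zero 𝒜]
  apply le_antisymm
  · intro x hx
    have hx0 : proj 𝒜 0 x ∈ sInf {n : Submodule K A | IsMaxLeftIdealOfDegZero (𝒜 0) n} :=
      Submodule.mem_sInf.2 fun n hn =>
        Submodule.mem_sInf.1 hx _ (isMaximalHomogeneous_comapProjZero hpos hn)
    exact Submodule.mem_sup.2 ⟨_, hx0, _, sub_proj_zero_mem_ker 𝒜 x, add_sub_cancel _ _⟩
  · refine sup_le (fun x hx => Submodule.mem_sInf.2 fun m hm => ?_)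
      (fun x hx => Submodule.mem_sInf.2 fun m hm => ?_)
    · exact (Submodule.mem_sInf.1 hx _ (IsMaximalHomogeneous.isMaxLeftIdealOfDegZero hpos hm)).1
    · exact IsMaximalHomogeneous.ker_proj_zero_le hpos hm hx
end

section
/- Let Γ be an ordered monoid with least element ε and A a finite-dimensional Γ-graded algebra. Then the graded radical of A (intersection of all maximal graded left ideals) coincides with the Jacobson radical of A (intersection of all maximal left ideals). -/
open DirectSum

/-- For a finite-dimensional algebra graded by an ordered monoid with least element `ε`,
the graded radical (intersection of all maximal graded left ideals) coincides with the
Jacobson radical (intersection of all maximal left ideals). -/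
theorem stmt5 {K : Type*} [Field K] {Γ : Type*} [AddMonoid Γ] [PartialOrder Γ] [DecidableEq Γ]
    (hstrict_left : ∀ a b c : Γ, b < c → a + b < a + c)
    (hstrict_right : ∀ a b c : Γ, b < c → b + a < c + a)
    (hleast : ∀ γ : Γ, γ ≠ 0 → 0 < γ)
    {A : Type*} [Ring A] [Algebra K A] (𝒜 : Γ → Submodule K A) [GradedAlgebra 𝒜]
    [FiniteDimensional K A] :
    sInf {m : Ideal A | m.IsHomogeneous 𝒜 ∧ m ≠ ⊤ ∧
        ∀ I : Ideal A, I.IsHomogeneous 𝒜 → m < I → I = ⊤} =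
      sInf {m : Ideal A | m.IsMaximal} := by
  classical
  -- γ₁ + γ₂ = 0 forces both to be zero
  have hzero : ∀ γ₁ γ₂ : Γ, γ₁ + γ₂ = 0 → γ₁ = 0 ∧ γ₂ = 0 := by
    intro γ₁ γ₂ h
    have h2 : γ₂ = 0 := by
      by_contra h2
      have hlt : γ₁ + 0 < γ₁ + γ₂ := hstrict_left _ _ _ (hleast _ h2)
      rw [add_zero, h] at hlt
      rcases eq_or_ne γ₁ 0 with h1 | h1
      · rw [h1] at hlt; exact lt_irrefl _ hlt
      · exact lt_irrefl _ (hlt.trans (hleast _ h1))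
    exact ⟨by rwa [h2, add_zero] at h, h2⟩
  -- support of the grading is finite
  have hS : {γ : Γ | 𝒜 γ ≠ ⊥}.Finite := by
    rw [← Set.finite_coe_iff]
    have hind : iSupIndep 𝒜 :=
      (DirectSum.Decomposition.isInternal 𝒜).submodule_iSupIndep
    have hind' : iSupIndep (fun γ : {γ : Γ | 𝒜 γ ≠ ⊥} => 𝒜 γ.1) :=
      hind.comp Subtype.val_injective
    choose v hv hv0 using fun γ : {γ : Γ | 𝒜 γ ≠ ⊥} =>
      Submodule.exists_mem_ne_zero_of_ne_bot γ.2
    exact (hind'.linearIndependent _ hv hv0).finite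
  set Sfin : Finset Γ := hS.toFinset with hSfin
  set fdeg : Γ → ℕ := fun γ => (Sfin.filter (fun δ => γ < δ)).card with hfdeg
  set n : ℕ := Sfin.card with hn
  set P : ℕ → Submodule K A := fun k => ⨆ γ ∈ {γ : Γ | fdeg γ < k}, 𝒜 γ with hP
  have hPtop : ∀ x : A, x ∈ P n := by
    intro x
    have htop : (⨆ γ, 𝒜 γ) = ⊤ :=
      (DirectSum.Decomposition.isInternal 𝒜).submodule_iSup_eq_top
    have : (⊤ : Submodule K A) ≤ P n := by
      rw [← htop]
      refine iSup_le fun γ => ?_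
      by_cases hγ : 𝒜 γ = ⊥
      · rw [hγ]; exact bot_le
      · refine le_trans ?_ (le_iSup₂ (f := fun γ _ => 𝒜 γ) γ ?_)
        · exact le_rfl
        · show fdeg γ < n
          refine Finset.card_lt_card ?_
          constructor
          · exact Finset.filter_subset _ _
          · intro hsub
            have hγS : γ ∈ Sfin := hS.mem_toFinset.2 hγ
            have := hsub hγS
            simp only [Finset.mem_filter] at this
            exact lt_irrefl _ this.2
    exact this trivial
  have hP0 : P 0 = ⊥ := by
    simp [hP]
  -- multiplying by an element with zero degree-0 part lowers the filtration
  have hstep : ∀ (k : ℕ) (x : A), (decompose 𝒜 x 0 : A) = 0 →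
      ∀ a ∈ P (k + 1), a * x ∈ P k := by
    intro k x hx0 a ha
    have hle : P (k + 1) ≤ Submodule.comap (LinearMap.mulRight K x) (P k) := by
      refine iSup₂_le fun γ hγ => ?_
      intro b hb
      simp only [Submodule.mem_comap, LinearMap.mulRight_apply]
      have hx0' : decompose 𝒜 x 0 = 0 := by
        ext; simpa using hx0
      have hb' : b * x = ∑ δ ∈ (decompose 𝒜 x).support, b * (decompose 𝒜 x δ : A) := by
        rw [← Finset.mul_sum, DirectSum.sum_support_decompose]
      rw [hb']
      refine Submodule.sum_mem _ fun δ hδ => ?_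
      have hδ0 : δ ≠ 0 := by
        rintro rfl
        exact (DFinsupp.mem_support_iff.1 hδ) hx0'
      have hmem : b * (decompose 𝒜 x δ : A) ∈ 𝒜 (γ + δ) :=
        SetLike.mul_mem_graded hb (decompose 𝒜 x δ).2
      by_cases hz : b * (decompose 𝒜 x δ : A) = 0
      · rw [hz]; exact Submodule.zero_mem _
      · have hγδS : γ + δ ∈ Sfin := by
          refine hS.mem_toFinset.2 ?_
          intro hbot
          rw [hbot] at hmem
          exact hz hmem
        have hltγ : γ < γ + δ := by
          have := hstrict_left γ 0 δ (hleast δ hδ0)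
          rwa [add_zero] at this
        have hcard : fdeg (γ + δ) < fdeg γ := by
          refine Finset.card_lt_card ?_
          constructor
          · intro ε hε
            simp only [Finset.mem_filter] at hε ⊢
            exact ⟨hε.1, hltγ.trans hε.2⟩
          · intro hsub
            have : γ + δ ∈ Sfin.filter (fun ε => γ + δ < ε) :=
              hsub (Finset.mem_filter.2 ⟨hγδS, hltγ⟩)
            simp only [Finset.mem_filter] at this
            exact lt_irrefl _ this.2
        have hfk : fdeg (γ + δ) < k := lt_of_lt_of_le hcard (Nat.lt_succ_iff.1 hγ)
        exact le_iSup₂ (f := fun γ _ => 𝒜 γ) (γ + δ) hfk hmem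
    exact hle ha
  -- every element with zero degree-0 component is nilpotent
  have hnil : ∀ x : A, (decompose 𝒜 x 0 : A) = 0 → IsNilpotent x := by
    intro x hx0
    have key : ∀ k : ℕ, x ^ (k + 1) ∈ P (n - k) := by
      intro k
      induction k with
      | zero => simpa using hPtop x
      | succ k ih =>
        rcases lt_or_ge k n with hk | hk
        · have heq : n - k = (n - (k + 1)) + 1 := by omega
          rw [heq] at ih
          have := hstep (n - (k + 1)) x hx0 _ ih
          rwa [← pow_succ] at this
        · have h0 : n - k = 0 := by omega
          rw [h0, hP0] at ih
          have hxk : x ^ (k + 1) = 0 := by simpa using ih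
          rw [pow_succ, hxk, zero_mul]
          exact Submodule.zero_mem _
    have := key n
    rw [Nat.sub_self, hP0, Submodule.mem_bot] at this
    exact ⟨n + 1, this⟩
  -- the set of elements with zero degree-0 component is a left ideal
  have hmul0 : ∀ c x : A, (decompose 𝒜 x 0 : A) = 0 →
      (decompose 𝒜 (c * x) 0 : A) = 0 := by
    intro c x hx0
    have hx0' : decompose 𝒜 x 0 = 0 := by ext; simpa using hx0
    rw [DirectSum.decompose_mul, DirectSum.coe_mul_apply]
    refine Finset.sum_eq_zero fun ij hij => ?_
    simp only [Finset.mem_filter, Finset.mem_product] at hij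
    exfalso
    have h2 : ij.2 = 0 := (hzero _ _ hij.2).2
    have := DFinsupp.mem_support_iff.1 hij.1.2
    rw [h2] at this
    exact this hx0'
  set Jg : Ideal A :=
    { carrier := {x : A | (decompose 𝒜 x 0 : A) = 0}
      add_mem' := by
        intro a b ha hb
        simp only [Set.mem_setOf_eq] at ha hb ⊢
        rw [DirectSum.decompose_add]
        simp [ha, hb]
      zero_mem' := by simp
      smul_mem' := by
        intro c x hx
        simpa [smul_eq_mul] using hmul0 c x hx } with hJg
  have hmemJg : ∀ x : A, x ∈ Jg ↔ (decompose 𝒜 x 0 : A) = 0 := fun x => Iff.rfl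
  -- homogeneous elements of nonzero degree are in Jg
  have hhomJg : ∀ (i : Γ), i ≠ 0 → ∀ a ∈ 𝒜 i, a ∈ Jg := by
    intro i hi a ha
    rw [hmemJg, DirectSum.decompose_of_mem_ne 𝒜 ha hi]
  -- Jg is contained in every maximal left ideal
  have hJg_le_max : ∀ m : Ideal A, m.IsMaximal → Jg ≤ m := by
    intro m hm z hz
    by_contra hzm
    have hlt : m < m ⊔ Ideal.span {z} := by
      refine lt_of_le_of_ne le_sup_left fun h => hzm ?_
      have : z ∈ m ⊔ Ideal.span {z} :=
        Submodule.mem_sup_right (Ideal.subset_span rfl)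
      rwa [← h] at this
    have htop : m ⊔ Ideal.span {z} = ⊤ := hm.1.2 _ hlt
    have h1 : (1 : A) ∈ m ⊔ Ideal.span {z} := htop ▸ Submodule.mem_top
    obtain ⟨a, ha, b, hb, hab⟩ := Submodule.mem_sup.1 h1
    obtain ⟨c, rfl⟩ := Submodule.mem_span_singleton.1 hb
    have hcz : (c • z : A) ∈ Jg := Jg.smul_mem c hz
    have hnilcz : IsNilpotent (c • z : A) := hnil _ (hmemJg _ |>.1 hcz)
    have haeq : a = 1 - c • z := eq_sub_of_add_eq hab
    have hu : IsUnit a := haeq ▸ hnilcz.isUnit_one_sub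
    exact hm.1.1 (Ideal.eq_top_of_isUnit_mem m ha hu)
  -- expressing the tail of the decomposition
  have hx_decomp : ∀ x : A, x - (decompose 𝒜 x 0 : A) =
      ∑ i ∈ (decompose 𝒜 x).support.erase 0, (decompose 𝒜 x i : A) := by
    intro x
    by_cases h0 : (0 : Γ) ∈ (decompose 𝒜 x).support
    · rw [eq_comm, Finset.sum_erase_eq_sub h0, DirectSum.sum_support_decompose]
    · rw [Finset.erase_eq_of_notMem h0, DirectSum.sum_support_decompose]
      have : decompose 𝒜 x 0 = 0 := DFinsupp.notMem_support_iff.1 h0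
      rw [this]
      simp
  have htail : ∀ (m : Ideal A), (∀ i : Γ, i ≠ 0 → ∀ a ∈ 𝒜 i, a ∈ m) →
      ∀ x : A, x - (decompose 𝒜 x 0 : A) ∈ m := by
    intro m hm x
    rw [hx_decomp]
    refine Submodule.sum_mem _ fun i hi => ?_
    exact hm i (Finset.ne_of_mem_erase hi) _ (decompose 𝒜 x i).2
  -- main set equality
  have hsets : {m : Ideal A | m.IsHomogeneous 𝒜 ∧ m ≠ ⊤ ∧
      ∀ I : Ideal A, I.IsHomogeneous 𝒜 → m < I → I = ⊤} = {m : Ideal A | m.IsMaximal} := by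
    ext m
    simp only [Set.mem_setOf_eq]
    constructor
    · rintro ⟨hhom, hne, hmax⟩
      -- the span of positive-degree parts
      set Pplus : Ideal A := Ideal.span (⋃ i ∈ {i : Γ | i ≠ 0}, (𝒜 i : Set A)) with hPplus
      have hPplus_hom : Pplus.IsHomogeneous 𝒜 := by
        refine Ideal.homogeneous_span 𝒜 _ fun x hx => ?_
        simp only [Set.mem_iUnion] at hx
        obtain ⟨i, _, hx⟩ := hx
        exact ⟨i, hx⟩
      have hPplusJg : Pplus ≤ Jg := by
        refine Ideal.span_le.2 fun x hx => ?_
        simp only [Set.mem_iUnion] at hx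
        obtain ⟨i, hi, hx⟩ := hx
        exact hhomJg i hi x hx
      have hPm : Pplus ≤ m := by
        rcases eq_or_ne (m ⊔ Pplus) ⊤ with htop | hnetop
        · exfalso
          have h1 : (1 : A) ∈ m ⊔ Pplus := htop ▸ Submodule.mem_top
          obtain ⟨a, ha, b, hb, hab⟩ := Submodule.mem_sup.1 h1
          have hnb : IsNilpotent b := hnil _ (hmemJg _ |>.1 (hPplusJg hb))
          have haeq : a = 1 - b := eq_sub_of_add_eq hab
          have hu : IsUnit a := haeq ▸ hnb.isUnit_one_sub
          exact hne (Ideal.eq_top_of_isUnit_mem m ha hu)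
        · rcases (le_sup_left : m ≤ m ⊔ Pplus).lt_or_eq with hlt | heq
          · exact absurd (hmax _ (hhom.sup hPplus_hom) hlt) hnetop
          · intro y hy
            rw [heq]
            exact Submodule.mem_sup_right hy
      have hApos : ∀ i : Γ, i ≠ 0 → ∀ a ∈ 𝒜 i, a ∈ m := by
        intro i hi a ha
        refine hPm (Ideal.subset_span ?_)
        simp only [Set.mem_iUnion]
        exact ⟨i, hi, ha⟩
      refine Ideal.isMaximal_def.2 ⟨hne, fun I hI => ?_⟩
      obtain ⟨x, hxI, hxm⟩ := SetLike.exists_of_lt hI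
      have hsub : x - (decompose 𝒜 x 0 : A) ∈ m := htail m hApos x
      have hx0I : (decompose 𝒜 x 0 : A) ∈ I := by
        have : (decompose 𝒜 x 0 : A) = x - (x - (decompose 𝒜 x 0 : A)) :=
          (sub_sub_cancel x _).symm
        rw [this]
        exact I.sub_mem hxI (hI.le hsub)
      have hx0m : (decompose 𝒜 x 0 : A) ∉ m := by
        intro h
        exact hxm (by
          have : x = (decompose 𝒜 x 0 : A) + (x - (decompose 𝒜 x 0 : A)) := by abel
          rw [this]
          exact m.add_mem h hsub)
      have hRhom : (m ⊔ Ideal.span {(decompose 𝒜 x 0 : A)}).IsHomogeneous 𝒜 := by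
        refine hhom.sup (Ideal.homogeneous_span 𝒜 _ fun y hy => ?_)
        rw [Set.mem_singleton_iff] at hy
        subst hy
        exact ⟨0, (decompose 𝒜 x 0).2⟩
      have hRlt : m < m ⊔ Ideal.span {(decompose 𝒜 x 0 : A)} := by
        refine lt_of_le_of_ne le_sup_left fun h => hx0m ?_
        have : (decompose 𝒜 x 0 : A) ∈ m ⊔ Ideal.span {(decompose 𝒜 x 0 : A)} :=
          Submodule.mem_sup_right (Ideal.subset_span rfl)
        rwa [← h] at this
      have hRtop := hmax _ hRhom hRlt
      have hRI : m ⊔ Ideal.span {(decompose 𝒜 x 0 : A)} ≤ I :=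
        sup_le hI.le (Ideal.span_le.2 (by simpa using hx0I))
      rw [hRtop] at hRI
      exact top_le_iff.1 hRI
    · intro hm
      refine ⟨?_, hm.1.1, fun I _ hlt => hm.1.2 I hlt⟩
      intro i x hx
      by_cases hi : i = 0
      · subst hi
        have : (decompose 𝒜 x 0 : A) = x - (x - (decompose 𝒜 x 0 : A)) :=
          (sub_sub_cancel x _).symm
        rw [this]
        refine m.sub_mem hx (htail m (fun j hj a ha => ?_) x)
        exact hJg_le_max m hm (hhomJg j hj a ha)
      · exact hJg_le_max m hm (hhomJg i hi _ (decompose 𝒜 x i).2)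
  rw [hsets]
end

section
/- Let Γ act by automorphisms on the Γ-algebra B, A be a Γ-graded algebra, F_A a free Γ-graded A-module with homogeneous basis {v_α}, and F_B a free B-module with basis {w_β}. Then F_A ⋉_Γ F_B is a free Γ-graded (A ⋉_Γ B)-module with homogeneous basis {v_α ⊗ w_β}. -/
open scoped TensorProduct

/-! Untwisting coordinates gives a `K`-linear equivalence
`(ι × κ →₀ C) ≃ (ι × κ →₀ A ⊗ B) ≃ (ι →₀ A) ⊗ (κ →₀ B) ≃ F_A ⊗ F_B`, where the middle step applies
`1 ⊗ ρ(deg v_α)` at the index `(α, β)`. Since `v_α` is homogeneous, the skew action reads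
`e(a ⊗ b) • (v_α ⊗ w_β) = a v_α ⊗ ρ(deg v_α)(b) w_β`, so this equivalence is the `C`-linear map
sending the standard basis to `{v_α ⊗ w_β}`, which is therefore a basis. -/

open Finsupp in
theorem Module.Basis.exists_of_bijective_linearCombination {R M ι : Type*} [Semiring R]
    [AddCommMonoid M] [Module R M] {b : ι → M} (h : Function.Bijective (linearCombination R b)) :
    ∃ bM : Module.Basis ι R M, ⇑bM = b :=
  ⟨.ofRepr (.symm (.ofBijective _ h)), funext fun i => by simp⟩

namespace Finsupp

variable {R M ι : Type*} [Semiring R] [AddCommMonoid M] [Module R M]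

noncomputable def mapRangeFamilyLinearEquiv (σ : ι → M ≃ₗ[R] M) : (ι →₀ M) ≃ₗ[R] (ι →₀ M) :=
  by classical exact
    finsuppLequivDFinsupp R ≪≫ₗ DFinsupp.mapRange.linearEquiv σ ≪≫ₗ (finsuppLequivDFinsupp R).symm

@[simp]
theorem mapRangeFamilyLinearEquiv_single (σ : ι → M ≃ₗ[R] M) (i : ι) (m : M) :
    mapRangeFamilyLinearEquiv σ (single i m) = single i (σ i m) := by
  classical
  simp [mapRangeFamilyLinearEquiv]

end Finsupp

section TwistedTensor

open TensorProduct Finsupp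

variable {K A B C FA FB P ι κ : Type*} [CommSemiring K]
  [Semiring A] [Algebra K A] [Semiring B] [Algebra K B] [Semiring C] [Module K C]
  [AddCommMonoid FA] [Module K FA] [Module A FA] [IsScalarTower K A FA]
  [AddCommMonoid FB] [Module K FB] [Module B FB] [IsScalarTower K B FB]
  [AddCommMonoid P] [Module K P]
  (e : A ⊗[K] B ≃ₗ[K] C) (τ : ι → B ≃ₗ[K] B)
  (v : Module.Basis ι A FA) (w : Module.Basis κ B FB) (eP : FA ⊗[K] FB ≃ₗ[K] P)

noncomputable def twistedTensorEquiv : ((ι × κ) →₀ C) ≃ₗ[K] P :=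
  mapRange.linearEquiv e.symm ≪≫ₗ
    mapRangeFamilyLinearEquiv (fun p => TensorProduct.congr (.refl K A) (τ p.1)) ≪≫ₗ
    (finsuppTensorFinsupp K K A B ι κ).symm ≪≫ₗ
    TensorProduct.congr (v.repr.restrictScalars K).symm (w.repr.restrictScalars K).symm ≪≫ₗ eP

theorem twistedTensorEquiv_single (α : ι) (β : κ) (a : A) (b : B) :
    twistedTensorEquiv e τ v w eP (single (α, β) (e (a ⊗ₜ b))) =
      eP ((a • v α) ⊗ₜ (τ α b • w β)) := by
  simp [twistedTensorEquiv]

variable [Module C P] [IsScalarTower K C P]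

theorem bijective_linearCombination_tmul_basis
    (hsmul : ∀ α a b y, e (a ⊗ₜ b) • eP (v α ⊗ₜ y) = eP ((a • v α) ⊗ₜ (τ α b • y))) :
    Function.Bijective (linearCombination C fun p : ι × κ => eP (v p.1 ⊗ₜ w p.2)) := by
  have h : (linearCombination C fun p : ι × κ => eP (v p.1 ⊗ₜ w p.2)).restrictScalars K =
      (twistedTensorEquiv e τ v w eP).toLinearMap := by
    refine lhom_ext' fun ⟨α, β⟩ => LinearMap.ext fun c => ?_
    obtain ⟨t, rfl⟩ := e.surjective c
    induction t using TensorProduct.induction_on with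
    | zero => simp
    | tmul a b => simp [twistedTensorEquiv_single, hsmul]
    | add t₁ t₂ h₁ h₂ => simp_all [single_add]
  rw [← LinearMap.coe_restrictScalars K, h]
  exact (twistedTensorEquiv e τ v w eP).bijective

end TwistedTensor

theorem stmt9_general {K : Type*} [Field K] {Γ : Type*}
    {A : Type*} [Ring A] [Algebra K A]
    {B : Type*} [Ring B] [Algebra K B]
    -- `Γ` acts on `B` by algebra automorphisms
    (ρ : Γ → (B ≃ₐ[K] B))
    -- the skew product algebra `C = A ⋉_Γ B`
    {C : Type*} [Ring C] [Algebra K C]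
    (e : (A ⊗[K] B) ≃ₗ[K] C)
    -- `F_A` : a `Γ`-graded `A`-module with homogeneous basis `v`
    {FA : Type*} [AddCommGroup FA] [Module K FA] [Module A FA] [IsScalarTower K A FA]
    (ℱ : Γ → Submodule K FA)
    {ι : Type*} (v : Module.Basis ι A FA) (d : ι → Γ) (hv : ∀ α : ι, v α ∈ ℱ (d α))
    -- `F_B` : a free `B`-module with basis `w`
    {FB : Type*} [AddCommGroup FB] [Module K FB] [Module B FB] [IsScalarTower K B FB]
    {κ : Type*} (w : Module.Basis κ B FB)
    -- `P = F_A ⋉_Γ F_B` : the `C`-module structure on `F_A ⊗ F_B`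
    {P : Type*} [AddCommGroup P] [Module K P] [Module C P] [IsScalarTower K C P]
    (eP : (FA ⊗[K] FB) ≃ₗ[K] P)
    (hPsmul : ∀ (γ₂ : Γ) (x : FA), x ∈ ℱ γ₂ → ∀ (a : A) (b : B) (y : FB),
      e (a ⊗ₜ[K] b) • eP (x ⊗ₜ[K] y) = eP ((a • x) ⊗ₜ[K] ((ρ γ₂ b) • y))) :
    -- then `P` is free over `C` with homogeneous basis `{v_α ⊗ w_β}`
    ∃ bP : Module.Basis (ι × κ) C P,
      (∀ (α : ι) (β : κ), bP (α, β) = eP (v α ⊗ₜ[K] w β)) ∧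
      (∀ (α : ι) (β : κ), eP (v α ⊗ₜ[K] w β) ∈
        Submodule.span K {p : P | ∃ x ∈ ℱ (d α), ∃ y : FB, p = eP (x ⊗ₜ[K] y)}) := by
  obtain ⟨bP, hbP⟩ := Module.Basis.exists_of_bijective_linearCombination <|
    bijective_linearCombination_tmul_basis e (fun α => (ρ (d α)).toLinearEquiv) v w eP
      fun α => hPsmul (d α) (v α) (hv α)
  exact ⟨bP, fun α β => congrFun hbP (α, β),
    fun α β => Submodule.subset_span ⟨v α, hv α, w β, rfl⟩⟩

/-- If `Γ` acts on `B` by automorphisms, `F_A` is a free `Γ`-graded `A`-module with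
homogeneous basis `{v_α}` and `F_B` is a free `B`-module with basis `{w_β}`, then
`F_A ⋉_Γ F_B` is a free `Γ`-graded `(A ⋉_Γ B)`-module with homogeneous basis
`{v_α ⊗ w_β}`. -/
theorem stmt9 {K : Type*} [Field K] {Γ : Type*} [AddMonoid Γ] [DecidableEq Γ]
    {A : Type*} [Ring A] [Algebra K A] (𝒜 : Γ → Submodule K A) [GradedAlgebra 𝒜]
    {B : Type*} [Ring B] [Algebra K B]
    -- `Γ` acts on `B` by algebra automorphisms
    (ρ : Γ → (B ≃ₐ[K] B))
    (hρ0 : ∀ b : B, ρ 0 b = b)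
    (hρadd : ∀ γ₁ γ₂ : Γ, ∀ b : B, ρ (γ₁ + γ₂) b = ρ γ₂ (ρ γ₁ b))
    -- the skew product algebra `C = A ⋉_Γ B`
    {C : Type*} [Ring C] [Algebra K C]
    (e : (A ⊗[K] B) ≃ₗ[K] C)
    (he1 : e ((1 : A) ⊗ₜ[K] (1 : B)) = 1)
    (hemul : ∀ (γ₂ : Γ) (a₁ a₂ : A), a₂ ∈ 𝒜 γ₂ → ∀ b₁ b₂ : B,
      e (a₁ ⊗ₜ[K] b₁) * e (a₂ ⊗ₜ[K] b₂) = e ((a₁ * a₂) ⊗ₜ[K] (ρ γ₂ b₁ * b₂)))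
    -- `F_A` : a `Γ`-graded `A`-module with homogeneous basis `v`
    {FA : Type*} [AddCommGroup FA] [Module K FA] [Module A FA] [IsScalarTower K A FA]
    (ℱ : Γ → Submodule K FA) (hInt : DirectSum.IsInternal ℱ)
    (hsmul : ∀ (γ₁ γ₂ : Γ) (a : A) (x : FA), a ∈ 𝒜 γ₁ → x ∈ ℱ γ₂ → a • x ∈ ℱ (γ₁ + γ₂))
    {ι : Type*} (v : Module.Basis ι A FA) (d : ι → Γ) (hv : ∀ α : ι, v α ∈ ℱ (d α))
    -- `F_B` : a free `B`-module with basis `w`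
    {FB : Type*} [AddCommGroup FB] [Module K FB] [Module B FB] [IsScalarTower K B FB]
    {κ : Type*} (w : Module.Basis κ B FB)
    -- `P = F_A ⋉_Γ F_B` : the `C`-module structure on `F_A ⊗ F_B`
    {P : Type*} [AddCommGroup P] [Module K P] [Module C P] [IsScalarTower K C P]
    (eP : (FA ⊗[K] FB) ≃ₗ[K] P)
    (hPsmul : ∀ (γ₂ : Γ) (x : FA), x ∈ ℱ γ₂ → ∀ (a : A) (b : B) (y : FB),
      e (a ⊗ₜ[K] b) • eP (x ⊗ₜ[K] y) = eP ((a • x) ⊗ₜ[K] ((ρ γ₂ b) • y))) :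
    -- then `P` is free over `C` with homogeneous basis `{v_α ⊗ w_β}`
    ∃ bP : Module.Basis (ι × κ) C P,
      (∀ (α : ι) (β : κ), bP (α, β) = eP (v α ⊗ₜ[K] w β)) ∧
      (∀ (α : ι) (β : κ), eP (v α ⊗ₜ[K] w β) ∈
        Submodule.span K {p : P | ∃ x ∈ ℱ (d α), ∃ y : FB, p = eP (x ⊗ₜ[K] y)}) :=
  stmt9_general ρ e ℱ v d hv w eP hPsmul
end

section
/- Suppose Γ acts by automorphisms on the Γ-algebra B. If P is a Γ-graded projective A-module and N is a projective B-module, then P ⋉_Γ N is a Γ-graded projective (A ⋉_Γ B)-module. -/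
/-!
Fix an `A`-linear `s : P → P →₀ A` and a `B`-linear `t : N → N →₀ B` splitting the canonical
surjections. For `x ∈ P_γ` and `y ∈ N`,
`x ⊗ y = ∑ (p, n), (1 ⊗ ρ_γ⁻¹ (t y n)) (s x p ⊗ 1) • (p ⊗ n)`,
and sending `x ⊗ y` to the coefficient family `(p, n) ↦ (1 ⊗ ρ_γ⁻¹ (t y n)) (s x p ⊗ 1)` is
`C`-linear, because for `a` of degree `γ'`
`(a ⊗ b) (1 ⊗ ρ_γ⁻¹ τ) (α ⊗ 1) = (1 ⊗ ρ_{γ'+γ}⁻¹ (ρ_γ b * τ)) (a α ⊗ 1)`.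
So `P ⋉_Γ N` is a direct summand of the free `C`-module on `P × N`.
-/

open TensorProduct DirectSum

section Homogeneous

variable {ι R M N P : Type*} [DecidableEq ι] [CommSemiring R] [AddCommMonoid M] [Module R M]
  [AddCommMonoid N] [Module R N] [AddCommMonoid P] [Module R P]
  (ℳ : ι → Submodule R M) [Decomposition ℳ]

@[elab_as_elim]
theorem TensorProduct.induction_on_homogeneous {motive : M ⊗[R] N → Prop} (z : M ⊗[R] N)
    (zero : motive 0) (tmul : ∀ {i} (m : ℳ i) (n : N), motive ((m : M) ⊗ₜ n))
    (add : ∀ z z', motive z → motive z' → motive (z + z')) : motive z := by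
  induction z using TensorProduct.induction_on with
  | zero => exact zero
  | add z z' hz hz' => exact add z z' hz hz'
  | tmul m n =>
    induction m using DirectSum.Decomposition.inductionOn ℳ with
    | zero => simpa using zero
    | homogeneous m => exact tmul m n
    | add m m' hm hm' => simpa [add_tmul] using add _ _ hm hm'

noncomputable def DirectSum.Decomposition.liftOnComponents (f : ι → M →ₗ[R] P) : M →ₗ[R] P :=
  toModule R ι P (fun i ↦ f i ∘ₗ (ℳ i).subtype) ∘ₗ (decomposeLinearEquiv ℳ).toLinearMap

theorem DirectSum.Decomposition.liftOnComponents_of_mem (f : ι → M →ₗ[R] P) {i : ι} {m : M}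
    (hm : m ∈ ℳ i) : liftOnComponents ℳ f m = f i m := by
  simp [liftOnComponents, decomposeLinearEquiv_apply, decompose_of_mem ℳ hm, ← lof_eq_of R]

end Homogeneous

namespace SkewProduct

variable {K Γ A B C P N Q : Type*} [CommSemiring K] [Semiring A] [Algebra K A]
  [Semiring B] [Algebra K B] [Semiring C] [Algebra K C]
  [AddCommMonoid P] [Module K P] [Module A P] [AddCommMonoid N] [Module K N] [Module B N]
  [AddCommMonoid Q] [Module K Q] [Module C Q]

def IsSkewMul (𝒜 : Γ → Submodule K A) (ρ : Γ → B ≃ₐ[K] B) (e : A ⊗[K] B ≃ₗ[K] C) : Prop :=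
  ∀ (γ : Γ) (a₁ a₂ : A), a₂ ∈ 𝒜 γ → ∀ b₁ b₂ : B,
    e (a₁ ⊗ₜ b₁) * e (a₂ ⊗ₜ b₂) = e ((a₁ * a₂) ⊗ₜ (ρ γ b₁ * b₂))

def IsSkewSMul (Pgr : Γ → Submodule K P) (ρ : Γ → B ≃ₐ[K] B) (e : A ⊗[K] B ≃ₗ[K] C)
    (eQ : P ⊗[K] N ≃ₗ[K] Q) : Prop :=
  ∀ (γ : Γ) (x : P), x ∈ Pgr γ → ∀ (a : A) (b : B) (y : N),
    e (a ⊗ₜ b) • eQ (x ⊗ₜ y) = eQ ((a • x) ⊗ₜ (ρ γ b • y))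

def ofLeft (e : A ⊗[K] B ≃ₗ[K] C) : A →ₗ[K] C := e.toLinearMap ∘ₗ (mk K A B).flip 1

def ofRight (e : A ⊗[K] B ≃ₗ[K] C) : B →ₗ[K] C := e.toLinearMap ∘ₗ mk K A B 1

@[simp] theorem ofLeft_apply (e : A ⊗[K] B ≃ₗ[K] C) (a : A) : ofLeft e a = e (a ⊗ₜ 1) := rfl

@[simp] theorem ofRight_apply (e : A ⊗[K] B ≃ₗ[K] C) (b : B) : ofRight e b = e (1 ⊗ₜ b) := rfl

def twist (e : A ⊗[K] B ≃ₗ[K] C) (ρ : Γ → B ≃ₐ[K] B) (γ : Γ) : A ⊗[K] B →ₗ[K] C :=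
  lift ((LinearMap.mul K C).flip.compl₁₂ (ofLeft e) (ofRight e ∘ₗ (ρ γ).symm.toLinearMap))

@[simp] theorem twist_tmul (e : A ⊗[K] B ≃ₗ[K] C) (ρ : Γ → B ≃ₐ[K] B) (γ : Γ) (a : A) (b : B) :
    twist e ρ γ (a ⊗ₜ b) = ofRight e ((ρ γ).symm b) * ofLeft e a := rfl

noncomputable def sectionOfDegree [IsScalarTower K A P] [IsScalarTower K B N]
    (e : A ⊗[K] B ≃ₗ[K] C) (ρ : Γ → B ≃ₐ[K] B) (s : P →ₗ[A] P →₀ A) (t : N →ₗ[B] N →₀ B)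
    (γ : Γ) : P ⊗[K] N →ₗ[K] (P × N →₀ C) :=
  Finsupp.mapRange.linearMap (twist e ρ γ) ∘ₗ (finsuppTensorFinsupp K K A B P N).toLinearMap ∘ₗ
    map (s.restrictScalars K) (t.restrictScalars K)

theorem sectionOfDegree_apply [IsScalarTower K A P] [IsScalarTower K B N]
    (e : A ⊗[K] B ≃ₗ[K] C) (ρ : Γ → B ≃ₐ[K] B) (s : P →ₗ[A] P →₀ A) (t : N →ₗ[B] N →₀ B)
    (γ : Γ) (x : P) (y : N) (p : P) (n : N) :
    sectionOfDegree e ρ s t γ (x ⊗ₜ y) (p, n) = twist e ρ γ (s x p ⊗ₜ t y n) := by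
  simp [sectionOfDegree, finsuppTensorFinsupp_apply]

theorem apply_symm_apply_add [Add Γ] {ρ : Γ → B ≃ₐ[K] B}
    (hρadd : ∀ γ₁ γ₂ : Γ, ∀ b : B, ρ (γ₁ + γ₂) b = ρ γ₂ (ρ γ₁ b)) (γ₁ γ₂ : Γ) (b : B) :
    ρ γ₁ ((ρ (γ₁ + γ₂)).symm b) = (ρ γ₂).symm b := by
  rw [AlgEquiv.eq_symm_apply, ← hρadd, AlgEquiv.apply_symm_apply]

theorem ofRight_smul {Pgr : Γ → Submodule K P} {ρ : Γ → B ≃ₐ[K] B} {e : A ⊗[K] B ≃ₗ[K] C}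
    {eQ : P ⊗[K] N ≃ₗ[K] Q} (hQ : IsSkewSMul Pgr ρ e eQ) {γ : Γ} {x : P} (hx : x ∈ Pgr γ)
    (b : B) (y : N) : ofRight e b • eQ (x ⊗ₜ y) = eQ (x ⊗ₜ (ρ γ b • y)) := by
  simpa using hQ γ x hx 1 b y

section Decomposed

variable [DecidableEq Γ] {e : A ⊗[K] B ≃ₗ[K] C} {ρ : Γ → B ≃ₐ[K] B}
  {Pgr : Γ → Submodule K P} [Decomposition Pgr] {eQ : P ⊗[K] N ≃ₗ[K] Q}

variable (e ρ Pgr) in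
noncomputable def sectionOfGrading [IsScalarTower K A P] [IsScalarTower K B N]
    (s : P →ₗ[A] P →₀ A) (t : N →ₗ[B] N →₀ B) : P ⊗[K] N →ₗ[K] (P × N →₀ C) :=
  lift (Decomposition.liftOnComponents Pgr fun γ ↦ curry (sectionOfDegree e ρ s t γ))

theorem sectionOfGrading_tmul_of_mem [IsScalarTower K A P] [IsScalarTower K B N]
    (s : P →ₗ[A] P →₀ A) (t : N →ₗ[B] N →₀ B) {γ : Γ} {x : P} (hx : x ∈ Pgr γ) (y : N) :
    sectionOfGrading e ρ Pgr s t (x ⊗ₜ y) = sectionOfDegree e ρ s t γ (x ⊗ₜ y) := by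
  rw [sectionOfGrading, lift.tmul, Decomposition.liftOnComponents_of_mem Pgr _ hx, curry_apply]

theorem ofLeft_smul (hQ : IsSkewSMul Pgr ρ e eQ) (a : A) (x : P) (y : N) :
    ofLeft e a • eQ (x ⊗ₜ y) = eQ ((a • x) ⊗ₜ y) := by
  induction x using DirectSum.Decomposition.inductionOn Pgr with
  | zero => simp
  | homogeneous x => simpa using hQ _ x x.2 a 1 y
  | add x x' h h' => simp only [add_tmul, smul_add, map_add, h, h']

theorem linearCombination_twist_single (hQ : IsSkewSMul Pgr ρ e eQ) (γ : Γ) (f : P →₀ A)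
    (n : N) (b : B) :
    Finsupp.linearCombination C (fun pn : P × N ↦ eQ (pn.1 ⊗ₜ pn.2))
        (Finsupp.mapRange.linearMap (twist e ρ γ)
          (finsuppTensorFinsupp K K A B P N (f ⊗ₜ Finsupp.single n b))) =
      ofRight e ((ρ γ).symm b) • eQ (Finsupp.linearCombination A id f ⊗ₜ n) := by
  induction f using Finsupp.induction_linear with
  | zero => simp
  | add f f' h h' => simp only [add_tmul, map_add, smul_add, h, h']
  | single p a =>
    rw [finsuppTensorFinsupp_single, Finsupp.mapRange.linearMap_apply, Finsupp.mapRange_single,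
      Finsupp.linearCombination_single, twist_tmul, mul_smul, ofLeft_smul hQ,
      Finsupp.linearCombination_single, id]

theorem linearCombination_sectionOfDegree [IsScalarTower K A P] [IsScalarTower K B N]
    (hQ : IsSkewSMul Pgr ρ e eQ) {s : P →ₗ[A] P →₀ A}
    (hs : Function.LeftInverse (Finsupp.linearCombination A id) s) {t : N →ₗ[B] N →₀ B}
    (ht : Function.LeftInverse (Finsupp.linearCombination B id) t) {γ : Γ} {x : P}
    (hx : x ∈ Pgr γ) (y : N) :
    Finsupp.linearCombination C (fun pn : P × N ↦ eQ (pn.1 ⊗ₜ pn.2))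
      (sectionOfDegree e ρ s t γ (x ⊗ₜ y)) = eQ (x ⊗ₜ y) := by
  suffices ∀ g : N →₀ B, Finsupp.linearCombination C (fun pn : P × N ↦ eQ (pn.1 ⊗ₜ pn.2))
      (Finsupp.mapRange.linearMap (twist e ρ γ) (finsuppTensorFinsupp K K A B P N (s x ⊗ₜ g))) =
      eQ (x ⊗ₜ Finsupp.linearCombination B id g) by
    simpa [sectionOfDegree, ht y] using this (t y)
  intro g
  induction g using Finsupp.induction_linear with
  | zero => simp
  | add g g' h h' => simp only [tmul_add, map_add, h, h']
  | single n b =>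
    rw [linearCombination_twist_single hQ, hs x, ofRight_smul hQ hx, AlgEquiv.apply_symm_apply,
      Finsupp.linearCombination_single, id]

theorem linearCombination_sectionOfGrading [IsScalarTower K A P] [IsScalarTower K B N]
    (hQ : IsSkewSMul Pgr ρ e eQ) {s : P →ₗ[A] P →₀ A}
    (hs : Function.LeftInverse (Finsupp.linearCombination A id) s) {t : N →ₗ[B] N →₀ B}
    (ht : Function.LeftInverse (Finsupp.linearCombination B id) t) (w : P ⊗[K] N) :
    Finsupp.linearCombination C (fun pn : P × N ↦ eQ (pn.1 ⊗ₜ pn.2))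
      (sectionOfGrading e ρ Pgr s t w) = eQ w := by
  induction w using TensorProduct.induction_on_homogeneous Pgr with
  | zero => simp
  | add w w' h h' => simp only [map_add, h, h']
  | tmul x y =>
    rw [sectionOfGrading_tmul_of_mem s t x.2, linearCombination_sectionOfDegree hQ hs ht x.2]

end Decomposed

variable [AddMonoid Γ] [DecidableEq Γ] {𝒜 : Γ → Submodule K A} [GradedAlgebra 𝒜]
  {ρ : Γ → B ≃ₐ[K] B} {e : A ⊗[K] B ≃ₗ[K] C}

theorem ofLeft_mul_ofRight (he : IsSkewMul 𝒜 ρ e) (a : A) (b : B) :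
    ofLeft e a * ofRight e b = e (a ⊗ₜ b) := by
  simp [he 0 a 1 SetLike.GradedOne.one_mem]

theorem ofRight_mul_ofLeft (he : IsSkewMul 𝒜 ρ e) {γ : Γ} {a : A} (ha : a ∈ 𝒜 γ) (b : B) :
    ofRight e b * ofLeft e a = ofLeft e a * ofRight e (ρ γ b) := by
  rw [ofLeft_mul_ofRight he]
  simpa using he γ 1 a ha b 1

theorem ofLeft_mul (he : IsSkewMul 𝒜 ρ e) (a a' : A) :
    ofLeft e (a * a') = ofLeft e a * ofLeft e a' := by
  induction a' using DirectSum.Decomposition.inductionOn 𝒜 with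
  | zero => simp
  | homogeneous a' => simp [he _ a a' a'.2]
  | add a' a'' h h' => simp only [mul_add, map_add, h, h']

theorem ofRight_mul (he : IsSkewMul 𝒜 ρ e) (hρ0 : ∀ b : B, ρ 0 b = b) (b b' : B) :
    ofRight e (b * b') = ofRight e b * ofRight e b' := by
  simp [he 0 1 1 SetLike.GradedOne.one_mem, hρ0]

theorem tmul_mul_twist (he : IsSkewMul 𝒜 ρ e) (hρ0 : ∀ b : B, ρ 0 b = b)
    (hρadd : ∀ γ₁ γ₂ : Γ, ∀ b : B, ρ (γ₁ + γ₂) b = ρ γ₂ (ρ γ₁ b))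
    {γ₁ : Γ} {a : A} (ha : a ∈ 𝒜 γ₁) (b : B) (γ₂ : Γ) (α : A) (τ : B) :
    e (a ⊗ₜ b) * twist e ρ γ₂ (α ⊗ₜ τ) = twist e ρ (γ₁ + γ₂) ((a * α) ⊗ₜ (ρ γ₂ b * τ)) := by
  have hσ : ρ γ₁ ((ρ (γ₁ + γ₂)).symm (ρ γ₂ b * τ)) = b * (ρ γ₂).symm τ := by
    rw [apply_symm_apply_add hρadd, map_mul, AlgEquiv.symm_apply_apply]
  calc e (a ⊗ₜ b) * twist e ρ γ₂ (α ⊗ₜ τ)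
      = ofLeft e a * ofRight e (b * (ρ γ₂).symm τ) * ofLeft e α := by
        rw [twist_tmul, ofRight_mul he hρ0, ← ofLeft_mul_ofRight he, mul_assoc, mul_assoc,
          mul_assoc]
    _ = ofRight e ((ρ (γ₁ + γ₂)).symm (ρ γ₂ b * τ)) * ofLeft e a * ofLeft e α := by
        rw [ofRight_mul_ofLeft he ha, hσ]
    _ = twist e ρ (γ₁ + γ₂) ((a * α) ⊗ₜ (ρ γ₂ b * τ)) := by
        rw [twist_tmul, ofLeft_mul he, mul_assoc]

theorem sectionOfDegree_tmul_smul [IsScalarTower K A P] [IsScalarTower K B N]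
    (he : IsSkewMul 𝒜 ρ e) (hρ0 : ∀ b : B, ρ 0 b = b)
    (hρadd : ∀ γ₁ γ₂ : Γ, ∀ b : B, ρ (γ₁ + γ₂) b = ρ γ₂ (ρ γ₁ b))
    (s : P →ₗ[A] P →₀ A) (t : N →ₗ[B] N →₀ B) {γ₁ : Γ} {a : A} (ha : a ∈ 𝒜 γ₁) (b : B)
    (γ₂ : Γ) (x : P) (y : N) :
    sectionOfDegree e ρ s t (γ₁ + γ₂) ((a • x) ⊗ₜ (ρ γ₂ b • y)) =
      e (a ⊗ₜ b) • sectionOfDegree e ρ s t γ₂ (x ⊗ₜ y) := by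
  ext ⟨p, n⟩
  rw [Finsupp.smul_apply, sectionOfDegree_apply, sectionOfDegree_apply, map_smul, map_smul,
    Finsupp.smul_apply, Finsupp.smul_apply, smul_eq_mul, smul_eq_mul, smul_eq_mul,
    tmul_mul_twist he hρ0 hρadd ha]

variable {Pgr : Γ → Submodule K P} [Decomposition Pgr] {eQ : P ⊗[K] N ≃ₗ[K] Q}

theorem sectionOfGrading_smul [IsScalarTower K A P] [IsScalarTower K B N]
    (he : IsSkewMul 𝒜 ρ e) (hρ0 : ∀ b : B, ρ 0 b = b)
    (hρadd : ∀ γ₁ γ₂ : Γ, ∀ b : B, ρ (γ₁ + γ₂) b = ρ γ₂ (ρ γ₁ b))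
    (hsmul : ∀ (γ₁ γ₂ : Γ) (a : A) (x : P), a ∈ 𝒜 γ₁ → x ∈ Pgr γ₂ → a • x ∈ Pgr (γ₁ + γ₂))
    (hQ : IsSkewSMul Pgr ρ e eQ) (s : P →ₗ[A] P →₀ A) (t : N →ₗ[B] N →₀ B) (c : C) (q : Q) :
    sectionOfGrading e ρ Pgr s t (eQ.symm (c • q)) =
      c • sectionOfGrading e ρ Pgr s t (eQ.symm q) := by
  obtain ⟨z, rfl⟩ := e.surjective c
  obtain ⟨w, rfl⟩ := eQ.surjective q
  rw [eQ.symm_apply_apply]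
  induction z using TensorProduct.induction_on_homogeneous 𝒜 with
  | zero => simp
  | add z z' h h' => simp only [map_add, add_smul, h, h']
  | tmul a b =>
    induction w using TensorProduct.induction_on_homogeneous Pgr with
    | zero => simp
    | add w w' h h' => simp only [map_add, smul_add, h, h']
    | @tmul γ₂ x y =>
      rw [hQ γ₂ x x.2, eQ.symm_apply_apply,
        sectionOfGrading_tmul_of_mem s t (hsmul _ _ _ _ a.2 x.2),
        sectionOfGrading_tmul_of_mem s t x.2, sectionOfDegree_tmul_smul he hρ0 hρadd s t a.2]

theorem projective [IsScalarTower K A P] [IsScalarTower K B N]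
    (he : IsSkewMul 𝒜 ρ e) (hρ0 : ∀ b : B, ρ 0 b = b)
    (hρadd : ∀ γ₁ γ₂ : Γ, ∀ b : B, ρ (γ₁ + γ₂) b = ρ γ₂ (ρ γ₁ b))
    (hsmul : ∀ (γ₁ γ₂ : Γ) (a : A) (x : P), a ∈ 𝒜 γ₁ → x ∈ Pgr γ₂ → a • x ∈ Pgr (γ₁ + γ₂))
    (hQ : IsSkewSMul Pgr ρ e eQ) [Module.Projective A P] [Module.Projective B N] :
    Module.Projective C Q := by
  obtain ⟨s, hs⟩ := Module.projective_def.mp ‹Module.Projective A P›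
  obtain ⟨t, ht⟩ := Module.projective_def.mp ‹Module.Projective B N›
  let ω : Q →ₗ[C] (P × N →₀ C) :=
    { toFun q := sectionOfGrading e ρ Pgr s t (eQ.symm q)
      map_add' q q' := by simp only [map_add]
      map_smul' := sectionOfGrading_smul he hρ0 hρadd hsmul hQ s t }
  refine .of_split ω (Finsupp.linearCombination C fun pn ↦ eQ (pn.1 ⊗ₜ pn.2)) ?_
  ext q
  change Finsupp.linearCombination C _ (sectionOfGrading e ρ Pgr s t (eQ.symm q)) = q
  rw [linearCombination_sectionOfGrading hQ hs ht, eQ.apply_symm_apply]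

end SkewProduct

theorem stmt10_general {K : Type*} [Field K] {Γ : Type*} [AddMonoid Γ] [DecidableEq Γ]
    {A : Type*} [Ring A] [Algebra K A] (𝒜 : Γ → Submodule K A) [GradedAlgebra 𝒜]
    {B : Type*} [Ring B] [Algebra K B]
    (ρ : Γ → (B ≃ₐ[K] B))
    (hρ0 : ∀ b : B, ρ 0 b = b)
    (hρadd : ∀ γ₁ γ₂ : Γ, ∀ b : B, ρ (γ₁ + γ₂) b = ρ γ₂ (ρ γ₁ b))
    -- the skew product algebra `C = A ⋉_Γ B`
    {C : Type*} [Ring C] [Algebra K C]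
    (e : (A ⊗[K] B) ≃ₗ[K] C)
    (hemul : ∀ (γ₂ : Γ) (a₁ a₂ : A), a₂ ∈ 𝒜 γ₂ → ∀ b₁ b₂ : B,
      e (a₁ ⊗ₜ[K] b₁) * e (a₂ ⊗ₜ[K] b₂) = e ((a₁ * a₂) ⊗ₜ[K] (ρ γ₂ b₁ * b₂)))
    -- `P` : a `Γ`-graded projective `A`-module
    {P : Type*} [AddCommGroup P] [Module K P] [Module A P] [IsScalarTower K A P]
    (Pgr : Γ → Submodule K P) (hInt : DirectSum.IsInternal Pgr)
    (hsmul : ∀ (γ₁ γ₂ : Γ) (a : A) (x : P), a ∈ 𝒜 γ₁ → x ∈ Pgr γ₂ → a • x ∈ Pgr (γ₁ + γ₂))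
    (hPproj : Module.Projective A P)
    -- `N` : a projective `B`-module
    {N : Type*} [AddCommGroup N] [Module K N] [Module B N] [IsScalarTower K B N]
    (hNproj : Module.Projective B N)
    -- `Q = P ⋉_Γ N` : the `C`-module structure on `P ⊗ N`
    {Q : Type*} [AddCommGroup Q] [Module K Q] [Module C Q]
    (eQ : (P ⊗[K] N) ≃ₗ[K] Q)
    (hQsmul : ∀ (γ₂ : Γ) (x : P), x ∈ Pgr γ₂ → ∀ (a : A) (b : B) (y : N),
      e (a ⊗ₜ[K] b) • eQ (x ⊗ₜ[K] y) = eQ ((a • x) ⊗ₜ[K] ((ρ γ₂ b) • y))) :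
    Module.Projective C Q := by
  let := hInt.chooseDecomposition
  exact SkewProduct.projective hemul hρ0 hρadd hsmul hQsmul

/-- If `Γ` acts by automorphisms on `B`, `P` is a `Γ`-graded projective `A`-module and
`N` a projective `B`-module, then `P ⋉_Γ N` is a projective `(A ⋉_Γ B)`-module (with its
natural `Γ`-grading). -/
theorem stmt10 {K : Type*} [Field K] {Γ : Type*} [AddMonoid Γ] [DecidableEq Γ]
    {A : Type*} [Ring A] [Algebra K A] (𝒜 : Γ → Submodule K A) [GradedAlgebra 𝒜]
    {B : Type*} [Ring B] [Algebra K B]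
    (ρ : Γ → (B ≃ₐ[K] B))
    (hρ0 : ∀ b : B, ρ 0 b = b)
    (hρadd : ∀ γ₁ γ₂ : Γ, ∀ b : B, ρ (γ₁ + γ₂) b = ρ γ₂ (ρ γ₁ b))
    -- the skew product algebra `C = A ⋉_Γ B`
    {C : Type*} [Ring C] [Algebra K C]
    (e : (A ⊗[K] B) ≃ₗ[K] C)
    (he1 : e ((1 : A) ⊗ₜ[K] (1 : B)) = 1)
    (hemul : ∀ (γ₂ : Γ) (a₁ a₂ : A), a₂ ∈ 𝒜 γ₂ → ∀ b₁ b₂ : B,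
      e (a₁ ⊗ₜ[K] b₁) * e (a₂ ⊗ₜ[K] b₂) = e ((a₁ * a₂) ⊗ₜ[K] (ρ γ₂ b₁ * b₂)))
    -- `P` : a `Γ`-graded projective `A`-module
    {P : Type*} [AddCommGroup P] [Module K P] [Module A P] [IsScalarTower K A P]
    (Pgr : Γ → Submodule K P) (hInt : DirectSum.IsInternal Pgr)
    (hsmul : ∀ (γ₁ γ₂ : Γ) (a : A) (x : P), a ∈ 𝒜 γ₁ → x ∈ Pgr γ₂ → a • x ∈ Pgr (γ₁ + γ₂))
    (hPproj : Module.Projective A P)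
    -- `N` : a projective `B`-module
    {N : Type*} [AddCommGroup N] [Module K N] [Module B N] [IsScalarTower K B N]
    (hNproj : Module.Projective B N)
    -- `Q = P ⋉_Γ N` : the `C`-module structure on `P ⊗ N`
    {Q : Type*} [AddCommGroup Q] [Module K Q] [Module C Q] [IsScalarTower K C Q]
    (eQ : (P ⊗[K] N) ≃ₗ[K] Q)
    (hQsmul : ∀ (γ₂ : Γ) (x : P), x ∈ Pgr γ₂ → ∀ (a : A) (b : B) (y : N),
      e (a ⊗ₜ[K] b) • eQ (x ⊗ₜ[K] y) = eQ ((a • x) ⊗ₜ[K] ((ρ γ₂ b) • y))) :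
    Module.Projective C Q :=
  stmt10_general 𝒜 ρ hρ0 hρadd e hemul Pgr hInt hsmul hPproj hNproj eQ hQsmul
end

section
/- Let Γ be a positive monoid acting by automorphisms on the Γ-algebra B, and A a Γ-graded algebra with A_ε ≅ K and Rad(B) = 0. Then the graded radical of the skew product satisfies rad(A ⋉_Γ B) = rad(A) ⋉_Γ B = rad(A) ⊗ B. -/
/-!
Taking degree-zero components is a ring homomorphism `π : R → R₀` when the grading monoid is
positive. The homogeneous left ideal `I ⊔ ker π` is proper whenever `I` is (the degree-zero part
of `1 = y + z` is `y₀ ∈ I`), so every maximal homogeneous left ideal contains `ker π`, and `comap π`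
is a bijection from the maximal left ideals of `R₀` onto the maximal homogeneous ones. Hence the
graded radical of `R` is `π⁻¹ (Rad R₀)`, which is `ker π = ⨁_{γ ≠ ε} R_γ` when `Rad R₀ = 0`.

This applies to `A`, with `A_ε ≅ K`, and to the skew product `C`, graded by `C_γ = A_γ ⊗ B`
(a decomposition transported from `A ⊗ B` along `e`), with `C_ε ≅ B`. Both radicals are therefore
the positive parts, and `⨁_{γ ≠ ε} A_γ ⊗ B = rad(A) ⊗ B`.
-/

open DirectSum TensorProduct

theorem Ring.jacobson_eq_bot_of_ringEquiv {R S : Type*} [Ring R] [Ring S] (e : R ≃+* S)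
    (h : Ring.jacobson R = ⊥) : Ring.jacobson S = ⊥ :=
  Module.jacobson_eq_bot_of_injective (e.symm : S →+* R).toSemilinearMap e.symm.injective h

theorem Ring.jacobson_eq_bot_of_divisionRing (K : Type*) [DivisionRing K] :
    Ring.jacobson K = ⊥ :=
  have := Ideal.bot_isMaximal (K := K)
  le_bot_iff.mp (Ring.jacobson_le_of_isMaximal ⊥)

theorem SetLike.GradeZero.jacobson_eq_bot {ι σ R B : Type*} [Ring R] [AddMonoid ι] [SetLike σ R]
    [AddSubgroupClass σ R] (𝒜 : ι → σ) [SetLike.GradedMonoid 𝒜] [Ring B] (ψ : B →+* R)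
    (hψ : Function.Injective ψ) (hrange : ∀ x, x ∈ 𝒜 0 ↔ ∃ b, ψ b = x)
    (hB : Ring.jacobson B = ⊥) : Ring.jacobson (𝒜 0) = ⊥ := by
  let ψ₀ : B →+* SetLike.GradeZero.subring 𝒜 := ψ.codRestrict _ fun b => (hrange _).mpr ⟨b, rfl⟩
  have hψ₀ : Function.Bijective ψ₀ :=
    ⟨fun b b' h => hψ (congrArg Subtype.val h), fun x => by
      obtain ⟨b, hb⟩ := (hrange x).mp x.2
      exact ⟨b, Subtype.ext hb⟩⟩
  exact Ring.jacobson_eq_bot_of_ringEquiv (RingEquiv.ofBijective ψ₀ hψ₀) hB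

section GradedAlgebra

variable {ι K R : Type*} [DecidableEq ι] [AddMonoid ι] [CommRing K] [Ring R] [Algebra K R]

theorem Ideal.isHomogeneous_iff_restrictScalars_eq_iSup (𝒜 : ι → Submodule K R)
    [GradedAlgebra 𝒜] (I : Ideal R) :
    I.IsHomogeneous 𝒜 ↔ I.restrictScalars K = ⨆ i, I.restrictScalars K ⊓ 𝒜 i := by
  classical
  constructor
  · intro hI
    refine le_antisymm (fun x hx => ?_) (iSup_le fun i => inf_le_left)
    rw [← sum_support_decompose 𝒜 x]
    exact Submodule.sum_mem _ fun i _ =>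
      Submodule.mem_iSup_of_mem i ⟨hI i hx, (decompose 𝒜 x i).2⟩
  · intro hI i x hx
    change x ∈ I.restrictScalars K at hx
    rw [hI] at hx
    induction hx using Submodule.iSup_induction' with
    | mem j y hy =>
      by_cases hij : j = i
      · subst hij
        rw [decompose_of_mem_same 𝒜 hy.2]
        exact hy.1
      · rw [decompose_of_mem_ne 𝒜 hy.2 hij]
        exact I.zero_mem
    | zero => simp
    | add y z _ _ hy hz =>
      rw [decompose_add, DirectSum.add_apply, Submodule.coe_add]
      exact I.add_mem hy hz

noncomputable abbrev GradedAlgebra.ofIsInternal (𝒜 : ι → Submodule K R) [SetLike.GradedMonoid 𝒜]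
    (h : IsInternal 𝒜) : GradedAlgebra 𝒜 :=
  { h.chooseDecomposition with }

end GradedAlgebra

namespace GradedRing

variable {ι K R : Type*} [DecidableEq ι] [AddMonoid ι] [CommRing K] [Ring R] [Algebra K R]
  (𝒜 : ι → Submodule K R) [GradedAlgebra 𝒜]

theorem coe_decompose_mul_zero_of_positive (hpos : ∀ i j : ι, i + j = 0 → i = 0 ∧ j = 0)
    (x y : R) : (decompose 𝒜 (x * y) 0 : R) = decompose 𝒜 x 0 * decompose 𝒜 y 0 := by
  induction x using DirectSum.Decomposition.inductionOn 𝒜 with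
  | zero => simp only [zero_mul, decompose_zero, DirectSum.zero_apply, ZeroMemClass.coe_zero]
  | add x x' hx hx' =>
    simp only [add_mul, decompose_add, DirectSum.add_apply, Submodule.coe_add, hx, hx']
  | homogeneous x =>
  induction y using DirectSum.Decomposition.inductionOn 𝒜 with
  | zero => simp only [mul_zero, decompose_zero, DirectSum.zero_apply, ZeroMemClass.coe_zero]
  | add y y' hy hy' =>
    simp only [mul_add, decompose_add, DirectSum.add_apply, Submodule.coe_add, hy, hy']
  | homogeneous y =>
  rename_i i j
  by_cases h : i + j = 0
  · have hxy : (x * y : R) ∈ 𝒜 0 := h ▸ SetLike.mul_mem_graded x.2 y.2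
    obtain ⟨rfl, rfl⟩ := hpos i j h
    rw [decompose_coe, decompose_coe, of_eq_same, of_eq_same, decompose_of_mem_same 𝒜 hxy]
  · rw [decompose_of_mem_ne 𝒜 (SetLike.GradedMul.mul_mem x.2 y.2) h]
    by_cases hi : i = 0
    · subst hi
      rw [decompose_of_mem_ne 𝒜 y.2 (by simpa using h), mul_zero]
    · rw [decompose_of_mem_ne 𝒜 x.2 hi, zero_mul]

def _root_.Ideal.IsHomogeneousMaximal (I : Ideal R) : Prop :=
  I.IsHomogeneous 𝒜 ∧ I ≠ ⊤ ∧ ∀ J : Ideal R, J.IsHomogeneous 𝒜 → I < J → J = ⊤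

def jacobson : Ideal R := sInf {I : Ideal R | I.IsHomogeneousMaximal 𝒜}

variable (hpos : ∀ i j : ι, i + j = 0 → i = 0 ∧ j = 0)

def projZeroRingHomOfPositive : R →+* 𝒜 0 where
  toFun x := decompose 𝒜 x 0
  map_one' := Subtype.ext (decompose_of_mem_same 𝒜 SetLike.GradedOne.one_mem)
  map_zero' := by rw [decompose_zero, DirectSum.zero_apply]
  map_add' x y := by rw [decompose_add, DirectSum.add_apply]
  map_mul' x y := Subtype.ext (coe_decompose_mul_zero_of_positive 𝒜 hpos x y)

@[simp]
theorem coe_projZeroRingHomOfPositive_apply (x : R) :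
    (projZeroRingHomOfPositive 𝒜 hpos x : R) = decompose 𝒜 x 0 := rfl

theorem projZeroRingHomOfPositive_of_mem_ne {i : ι} {x : R} (hx : x ∈ 𝒜 i) (hi : i ≠ 0) :
    projZeroRingHomOfPositive 𝒜 hpos x = 0 :=
  Subtype.ext (decompose_of_mem_ne 𝒜 hx hi)

theorem projZeroRingHomOfPositive_coe (y : 𝒜 0) : projZeroRingHomOfPositive 𝒜 hpos y = y :=
  Subtype.ext (decompose_of_mem_same 𝒜 y.2)

theorem projZeroRingHomOfPositive_surjective :
    Function.Surjective (projZeroRingHomOfPositive 𝒜 hpos) :=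
  fun y => ⟨y, projZeroRingHomOfPositive_coe 𝒜 hpos y⟩

theorem restrictScalars_ker_projZeroRingHomOfPositive :
    (RingHom.ker (projZeroRingHomOfPositive 𝒜 hpos)).restrictScalars K =
      ⨆ i : {i : ι // i ≠ 0}, 𝒜 i := by
  have hle (i : {i : ι // i ≠ 0}) : 𝒜 i ≤ ⨆ i : {i : ι // i ≠ 0}, 𝒜 i :=
    le_iSup (fun i : {i : ι // i ≠ 0} => 𝒜 i) i
  refine le_antisymm (fun x hx => ?_) (iSup_le fun i x hx => ?_)
  · have hsub (y : R) : y - decompose 𝒜 y 0 ∈ ⨆ i : {i : ι // i ≠ 0}, 𝒜 i := by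
      induction y using DirectSum.Decomposition.inductionOn 𝒜 with
      | zero => simp
      | homogeneous y =>
        rename_i i
        by_cases hi : i = 0
        · subst hi
          simp
        · rw [decompose_of_mem_ne 𝒜 y.2 hi, sub_zero]
          exact hle ⟨i, hi⟩ y.2
      | add y y' hy hy' =>
        rw [decompose_add, DirectSum.add_apply, Submodule.coe_add, add_sub_add_comm]
        exact add_mem hy hy'
    have hx0 : (decompose 𝒜 x 0 : R) = 0 := congrArg Subtype.val (RingHom.mem_ker.mp hx)
    simpa [hx0] using hsub x
  · exact RingHom.mem_ker.mpr (projZeroRingHomOfPositive_of_mem_ne 𝒜 hpos hx i.2)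

theorem isHomogeneous_comap_projZeroRingHomOfPositive (m : Ideal (𝒜 0)) :
    (m.comap (projZeroRingHomOfPositive 𝒜 hpos)).IsHomogeneous 𝒜 := by
  intro i x hx
  rw [Ideal.mem_comap] at hx ⊢
  by_cases hi : i = 0
  · subst hi
    rwa [projZeroRingHomOfPositive_coe]
  · rw [projZeroRingHomOfPositive_of_mem_ne 𝒜 hpos (decompose 𝒜 x i).2 hi]
    exact m.zero_mem

theorem ker_projZeroRingHomOfPositive_le {I : Ideal R} (hI : I.IsHomogeneousMaximal 𝒜) :
    RingHom.ker (projZeroRingHomOfPositive 𝒜 hpos) ≤ I := by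
  obtain ⟨hhom, hne, hmax⟩ := hI
  by_contra hle
  have hsup : I ⊔ RingHom.ker (projZeroRingHomOfPositive 𝒜 hpos) = ⊤ := by
    refine hmax _ (hhom.sup ?_) (left_lt_sup.mpr hle)
    rw [RingHom.ker_eq_comap_bot]
    exact isHomogeneous_comap_projZeroRingHomOfPositive 𝒜 hpos ⊥
  obtain ⟨y, hy, z, hz, hyz⟩ := Submodule.mem_sup.mp (hsup ▸ Submodule.mem_top : (1 : R) ∈ _)
  have hy0 : projZeroRingHomOfPositive 𝒜 hpos y = 1 := by
    rw [← map_one (projZeroRingHomOfPositive 𝒜 hpos), ← hyz, map_add, RingHom.mem_ker.mp hz,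
      add_zero]
  have h1 := hhom 0 hy
  rw [← coe_projZeroRingHomOfPositive_apply 𝒜 hpos, hy0] at h1
  exact hne ((Ideal.eq_top_iff_one I).mpr h1)

theorem isHomogeneousMaximal_iff {I : Ideal R} :
    I.IsHomogeneousMaximal 𝒜 ↔
      ∃ m : Ideal (𝒜 0), m.IsMaximal ∧ m.comap (projZeroRingHomOfPositive 𝒜 hpos) = I := by
  set π := projZeroRingHomOfPositive 𝒜 hpos
  have hπ := projZeroRingHomOfPositive_surjective 𝒜 hpos
  have hcomap_lt {m m' : Ideal (𝒜 0)} : m.comap π < m'.comap π ↔ m < m' :=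
    (Ideal.orderEmbeddingOfSurjective π hπ).lt_iff_lt
  have hcomap_eq_top {m : Ideal (𝒜 0)} : m.comap π = ⊤ ↔ m = ⊤ := by
    rw [← Ideal.comap_top (f := π), (Ideal.comap_injective_of_surjective π hπ).eq_iff]
  have hcomap_map {J : Ideal R} (hJ : RingHom.ker π ≤ J) : (J.map π).comap π = J := by
    rw [Ideal.comap_map_of_surjective π hπ, ← RingHom.ker_eq_comap_bot, sup_eq_left.mpr hJ]
  constructor
  · intro hI
    have hI_eq := hcomap_map (ker_projZeroRingHomOfPositive_le 𝒜 hpos hI)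
    refine ⟨I.map π, Ideal.isMaximal_def.mpr ⟨fun htop => hI.2.1 ?_, fun m' hlt => ?_⟩, hI_eq⟩
    · rw [← hI_eq, htop, Ideal.comap_top]
    · refine hcomap_eq_top.mp
        (hI.2.2 _ (isHomogeneous_comap_projZeroRingHomOfPositive 𝒜 hpos m') ?_)
      rwa [← hI_eq, hcomap_lt]
  · rintro ⟨m, hm, rfl⟩
    refine ⟨isHomogeneous_comap_projZeroRingHomOfPositive 𝒜 hpos m,
      hcomap_eq_top.not.mpr hm.ne_top, fun J _ hlt => ?_⟩
    have hJ : (J.map π).comap π = J := hcomap_map <|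
      (RingHom.ker_eq_comap_bot π).trans_le ((Ideal.comap_mono bot_le).trans hlt.le)
    rw [← hJ, hcomap_eq_top]
    exact hm.out.2 _ (hcomap_lt.mp (hJ.symm ▸ hlt))

theorem jacobson_eq_comap_jacobson :
    jacobson 𝒜 = (Ring.jacobson (𝒜 0)).comap (projZeroRingHomOfPositive 𝒜 hpos) := by
  have hset : {I : Ideal R | I.IsHomogeneousMaximal 𝒜} =
      Ideal.comap (projZeroRingHomOfPositive 𝒜 hpos) '' {m | m.IsMaximal} :=
    Set.ext fun _ => isHomogeneousMaximal_iff 𝒜 hpos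
  rw [jacobson, hset, Ring.jacobson_eq_sInf_isMaximal, Ideal.comap_sInf, sInf_image]

theorem restrictScalars_jacobson_eq_iSup (hpos : ∀ i j : ι, i + j = 0 → i = 0 ∧ j = 0)
    (h : Ring.jacobson (𝒜 0) = ⊥) :
    (jacobson 𝒜).restrictScalars K = ⨆ i : {i : ι // i ≠ 0}, 𝒜 i := by
  rw [jacobson_eq_comap_jacobson 𝒜 hpos, h, ← RingHom.ker_eq_comap_bot,
    restrictScalars_ker_projZeroRingHomOfPositive]

end GradedRing

section SkewProduct

variable {K A B C : Type*} [CommRing K] [Ring A] [Algebra K A] [Ring B] [Algebra K B]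
  [Ring C] [Algebra K C] (e : A ⊗[K] B ≃ₗ[K] C)

def tensorSpan (M : Submodule K A) : Submodule K C :=
  Submodule.span K {c : C | ∃ a ∈ M, ∃ b : B, c = e (a ⊗ₜ[K] b)}

theorem tensorSpan_eq_map_map₂ (M : Submodule K A) :
    tensorSpan e M = (Submodule.map₂ (TensorProduct.mk K A B) M ⊤).map (e : A ⊗[K] B →ₗ[K] C) := by
  rw [Submodule.map₂_eq_span_image2, Submodule.map_span, tensorSpan]
  congr 1
  ext c
  simp [eq_comm]

theorem tensorSpan_iSup {ι : Sort*} (M : ι → Submodule K A) :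
    tensorSpan e (⨆ i, M i) = ⨆ i, tensorSpan e (M i) := by
  simp only [tensorSpan_eq_map_map₂, Submodule.map₂_iSup_left, Submodule.map_iSup]

theorem tensorSpan_eq_map_range_rTensor (M : Submodule K A) :
    tensorSpan e M = (LinearMap.range (M.subtype.rTensor B)).map (e : A ⊗[K] B →ₗ[K] C) := by
  rw [tensorSpan_eq_map_map₂, Submodule.map₂_eq_span_image2, LinearMap.rTensor,
    TensorProduct.range_map_eq_span_tmul]
  congr 2
  ext t
  simp [eq_comm]

theorem tensorSpan_span_singleton_one :
    tensorSpan e (K ∙ (1 : A)) = LinearMap.range (e.toLinearMap ∘ₗ TensorProduct.mk K A B 1) := by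
  refine le_antisymm (Submodule.span_le.mpr ?_) ?_
  · rintro _ ⟨a, ha, b, rfl⟩
    obtain ⟨c, rfl⟩ := Submodule.mem_span_singleton.mp ha
    exact ⟨c • b, by simp [TensorProduct.smul_tmul]⟩
  · rintro _ ⟨b, rfl⟩
    exact Submodule.subset_span ⟨1, Submodule.mem_span_singleton_self 1, b, rfl⟩

theorem isInternal_tensorSpan {ι : Type*} [DecidableEq ι] (𝒜 : ι → Submodule K A)
    [Decomposition 𝒜] : IsInternal fun i => tensorSpan e (𝒜 i) := by
  have h := (tensorDecomposition 𝒜 B).isInternal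
  rw [isInternal_submodule_iff_iSupIndep_and_iSup_eq_top] at h ⊢
  have heq : (fun i => tensorSpan e (𝒜 i)) =
      Submodule.orderIsoMapComap e ∘ decomposeTensor 𝒜 B := by
    ext1 i
    rw [tensorSpan_eq_map_range_rTensor]
    rfl
  rw [heq, Function.comp_def, ← OrderIso.map_iSup, h.2, OrderIso.map_top]
  exact ⟨h.1.map_orderIso _, rfl⟩

theorem gradedMonoid_tensorSpan {ι : Type*} [AddMonoid ι] (𝒜 : ι → Submodule K A)
    [SetLike.GradedMonoid 𝒜] (he1 : e (1 ⊗ₜ[K] 1) = 1)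
    (hmul : ∀ i (a₁ a₂ : A), a₂ ∈ 𝒜 i → ∀ b₁ b₂ : B,
      ∃ b : B, e (a₁ ⊗ₜ[K] b₁) * e (a₂ ⊗ₜ[K] b₂) = e ((a₁ * a₂) ⊗ₜ[K] b)) :
    SetLike.GradedMonoid fun i => tensorSpan e (𝒜 i) where
  one_mem := he1 ▸ Submodule.subset_span ⟨1, SetLike.GradedOne.one_mem, 1, rfl⟩
  mul_mem i j x y hx hy := by
    have hle : tensorSpan e (𝒜 i) * tensorSpan e (𝒜 j) ≤ tensorSpan e (𝒜 (i + j)) := by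
      rw [tensorSpan, tensorSpan, Submodule.span_mul_span, Submodule.span_le]
      rintro _ ⟨_, ⟨a₁, ha₁, b₁, rfl⟩, _, ⟨a₂, ha₂, b₂, rfl⟩, rfl⟩
      obtain ⟨b, hb⟩ := hmul j a₁ a₂ ha₂ b₁ b₂
      exact Submodule.subset_span ⟨_, SetLike.mul_mem_graded ha₁ ha₂, b, hb⟩
    exact hle (Submodule.mul_mem_mul hx hy)

def includeRightRingHom (he1 : e (1 ⊗ₜ[K] 1) = 1)
    (hmul : ∀ b₁ b₂ : B, e (1 ⊗ₜ[K] b₁) * e (1 ⊗ₜ[K] b₂) = e (1 ⊗ₜ[K] (b₁ * b₂))) : B →+* C where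
  toFun b := e (1 ⊗ₜ[K] b)
  map_one' := he1
  map_mul' b₁ b₂ := (hmul b₁ b₂).symm
  map_zero' := by rw [tmul_zero, map_zero]
  map_add' b₁ b₂ := by rw [tmul_add, map_add]

theorem jacobson_gradeZero_eq_bot_of_eq_tensorSpan [Module.FaithfullyFlat K A] {ι : Type*}
    [AddMonoid ι] (𝒞 : ι → Submodule K C) [SetLike.GradedMonoid 𝒞]
    (h𝒞 : 𝒞 0 = tensorSpan e (K ∙ (1 : A))) (he1 : e (1 ⊗ₜ[K] 1) = 1)
    (hmul : ∀ b₁ b₂ : B, e (1 ⊗ₜ[K] b₁) * e (1 ⊗ₜ[K] b₂) = e (1 ⊗ₜ[K] (b₁ * b₂)))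
    (hB : Ring.jacobson B = ⊥) : Ring.jacobson (𝒞 0) = ⊥ := by
  refine SetLike.GradeZero.jacobson_eq_bot 𝒞 (includeRightRingHom e he1 hmul) ?_ (fun x => ?_) hB
  · exact (injective_iff_map_eq_zero _).mpr fun b hb =>
      (Module.FaithfullyFlat.one_tmul_eq_zero_iff (A := A) K B b).mp (e.map_eq_zero_iff.mp hb)
  · rw [h𝒞, tensorSpan_span_singleton_one]
    rfl

end SkewProduct

theorem jacobson_gradeZero_eq_bot_of_eq_span_one {ι K A : Type*} [AddMonoid ι] [Field K] [Ring A]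
    [Algebra K A] [Nontrivial A] (𝒜 : ι → Submodule K A) [SetLike.GradedMonoid 𝒜]
    (h𝒜 : 𝒜 0 = K ∙ (1 : A)) : Ring.jacobson (𝒜 0) = ⊥ := by
  refine SetLike.GradeZero.jacobson_eq_bot 𝒜 (algebraMap K A) (algebraMap K A).injective
    (fun x => ?_) (Ring.jacobson_eq_bot_of_divisionRing K)
  simp [h𝒜, Submodule.mem_span_singleton, Algebra.algebraMap_eq_smul_one]

theorem stmt11_general {K : Type*} [Field K] {Γ : Type*} [AddMonoid Γ] [DecidableEq Γ]
    (hpos : ∀ γ₁ γ₂ : Γ, γ₁ + γ₂ = 0 → γ₁ = 0 ∧ γ₂ = 0)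
    {A : Type*} [Ring A] [Algebra K A] (𝒜 : Γ → Submodule K A) [GradedAlgebra 𝒜]
    -- `A_ε ≅ K`
    (hA0 : ∀ a ∈ 𝒜 (0 : Γ), ∃ c : K, a = c • (1 : A))
    {B : Type*} [Ring B] [Algebra K B]
    -- `Rad(B) = 0`
    (hB : (⊥ : Ideal B).jacobson = ⊥)
    -- `Γ` acts on `B` by algebra automorphisms
    (ρ : Γ → (B ≃ₐ[K] B))
    (hρ0 : ∀ b : B, ρ 0 b = b)
    -- the skew product algebra `C = A ⋉_Γ B`
    {C : Type*} [Ring C] [Algebra K C]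
    (e : (A ⊗[K] B) ≃ₗ[K] C)
    (he1 : e ((1 : A) ⊗ₜ[K] (1 : B)) = 1)
    (hemul : ∀ (γ₂ : Γ) (a₁ a₂ : A), a₂ ∈ 𝒜 γ₂ → ∀ b₁ b₂ : B,
      e (a₁ ⊗ₜ[K] b₁) * e (a₂ ⊗ₜ[K] b₂) = e ((a₁ * a₂) ⊗ₜ[K] (ρ γ₂ b₁ * b₂)))
    -- the grading of `C` and the notion of homogeneous ideal of `C`
    (𝒞 : Γ → Submodule K C)
    (h𝒞 : ∀ γ : Γ, 𝒞 γ = Submodule.span K {c : C | ∃ a ∈ 𝒜 γ, ∃ b : B, c = e (a ⊗ₜ[K] b)})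
    (HomC : Ideal C → Prop)
    (hHomC : ∀ I : Ideal C,
      HomC I ↔ I.restrictScalars K = ⨆ γ : Γ, (I.restrictScalars K ⊓ 𝒞 γ)) :
    (sInf {I : Ideal C | HomC I ∧ I ≠ ⊤ ∧
        ∀ J : Ideal C, HomC J → I < J → J = ⊤}).restrictScalars K =
      Submodule.span K {c : C |
        ∃ a ∈ sInf {m : Ideal A | m.IsHomogeneous 𝒜 ∧ m ≠ ⊤ ∧
          ∀ I : Ideal A, I.IsHomogeneous 𝒜 → m < I → I = ⊤},
        ∃ b : B, c = e (a ⊗ₜ[K] b)} := by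
  rcases subsingleton_or_nontrivial A with hA | hA
  · have : Subsingleton C := subsingleton_of_zero_eq_one <| by
      rw [← he1, Subsingleton.elim (1 : A) 0, zero_tmul, map_zero]
    exact Subsingleton.elim _ _
  have h𝒜0 : 𝒜 0 = K ∙ (1 : A) := by
    refine le_antisymm (fun a ha => ?_) ((Submodule.span_singleton_le_iff_mem _ _).mpr
      SetLike.GradedOne.one_mem)
    obtain ⟨c, rfl⟩ := hA0 a ha
    exact Submodule.smul_mem _ c (Submodule.mem_span_singleton_self 1)
  have h𝒞' : 𝒞 = fun γ => tensorSpan e (𝒜 γ) := funext h𝒞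
  have : SetLike.GradedMonoid 𝒞 :=
    h𝒞' ▸ gradedMonoid_tensorSpan e 𝒜 he1 fun γ a₁ a₂ h b₁ b₂ => ⟨_, hemul γ a₁ a₂ h b₁ b₂⟩
  let : GradedAlgebra 𝒞 := GradedAlgebra.ofIsInternal 𝒞 (h𝒞' ▸ isInternal_tensorSpan e 𝒜)
  have hjacC : Ring.jacobson (𝒞 0) = ⊥ :=
    jacobson_gradeZero_eq_bot_of_eq_tensorSpan e 𝒞 (h𝒜0 ▸ h𝒞 0) he1
      (fun b₁ b₂ => by rw [hemul 0 1 1 SetLike.GradedOne.one_mem, mul_one, hρ0])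
      (by rwa [← Ideal.jacobson_bot])
  have hHom (I : Ideal C) : HomC I ↔ I.IsHomogeneous 𝒞 :=
    (hHomC I).trans (Ideal.isHomogeneous_iff_restrictScalars_eq_iSup 𝒞 I).symm
  simp only [hHom]
  change (GradedRing.jacobson 𝒞).restrictScalars K =
    tensorSpan e ((GradedRing.jacobson 𝒜).restrictScalars K)
  rw [GradedRing.restrictScalars_jacobson_eq_iSup 𝒞 hpos hjacC,
    GradedRing.restrictScalars_jacobson_eq_iSup 𝒜 hpos
      (jacobson_gradeZero_eq_bot_of_eq_span_one 𝒜 h𝒜0), tensorSpan_iSup]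
  exact iSup_congr fun i => h𝒞 i

/-- Over a positive monoid `Γ` acting by automorphisms on `B`, if `A_ε ≅ K` and
`Rad(B) = 0`, then the graded radical of the skew product `C = A ⋉_Γ B` is
`rad(A) ⋉_Γ B = rad(A) ⊗ B`.  Graded (left) ideals of `C` are taken with respect to
the grading `C_γ = A_γ ⊗ B`, an ideal being homogeneous when it is the sum of its
intersections with the homogeneous components. -/
theorem stmt11 {K : Type*} [Field K] {Γ : Type*} [AddMonoid Γ] [DecidableEq Γ]
    (hpos : ∀ γ₁ γ₂ : Γ, γ₁ + γ₂ = 0 → γ₁ = 0 ∧ γ₂ = 0)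
    {A : Type*} [Ring A] [Algebra K A] (𝒜 : Γ → Submodule K A) [GradedAlgebra 𝒜]
    -- `A_ε ≅ K`
    (hA0 : ∀ a ∈ 𝒜 (0 : Γ), ∃ c : K, a = c • (1 : A))
    {B : Type*} [Ring B] [Algebra K B]
    -- `Rad(B) = 0`
    (hB : (⊥ : Ideal B).jacobson = ⊥)
    -- `Γ` acts on `B` by algebra automorphisms
    (ρ : Γ → (B ≃ₐ[K] B))
    (hρ0 : ∀ b : B, ρ 0 b = b)
    (hρadd : ∀ γ₁ γ₂ : Γ, ∀ b : B, ρ (γ₁ + γ₂) b = ρ γ₂ (ρ γ₁ b))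
    -- the skew product algebra `C = A ⋉_Γ B`
    {C : Type*} [Ring C] [Algebra K C]
    (e : (A ⊗[K] B) ≃ₗ[K] C)
    (he1 : e ((1 : A) ⊗ₜ[K] (1 : B)) = 1)
    (hemul : ∀ (γ₂ : Γ) (a₁ a₂ : A), a₂ ∈ 𝒜 γ₂ → ∀ b₁ b₂ : B,
      e (a₁ ⊗ₜ[K] b₁) * e (a₂ ⊗ₜ[K] b₂) = e ((a₁ * a₂) ⊗ₜ[K] (ρ γ₂ b₁ * b₂)))
    -- the grading of `C` and the notion of homogeneous ideal of `C`
    (𝒞 : Γ → Submodule K C)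
    (h𝒞 : ∀ γ : Γ, 𝒞 γ = Submodule.span K {c : C | ∃ a ∈ 𝒜 γ, ∃ b : B, c = e (a ⊗ₜ[K] b)})
    (HomC : Ideal C → Prop)
    (hHomC : ∀ I : Ideal C,
      HomC I ↔ I.restrictScalars K = ⨆ γ : Γ, (I.restrictScalars K ⊓ 𝒞 γ)) :
    (sInf {I : Ideal C | HomC I ∧ I ≠ ⊤ ∧
        ∀ J : Ideal C, HomC J → I < J → J = ⊤}).restrictScalars K =
      Submodule.span K {c : C |
        ∃ a ∈ sInf {m : Ideal A | m.IsHomogeneous 𝒜 ∧ m ≠ ⊤ ∧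
          ∀ I : Ideal A, I.IsHomogeneous 𝒜 → m < I → I = ⊤},
        ∃ b : B, c = e (a ⊗ₜ[K] b)} :=
  stmt11_general hpos 𝒜 hA0 hB ρ hρ0 e he1 hemul 𝒞 h𝒞 HomC hHomC
end

section
/- Define φ^k: Z^n → Z^{n+1} by φ^k(z) = (∑_{i≠k} z_i, ∑_{i=k+1}^n z_i, z₁, …, z_{k−1}, z_n, z_{n−1}, …, z_{k+1}), and order M ⊆ Z^n by z ≤_k z' iff φ^k(z) ≤_lex φ^k(z'). Let Φ_{n,k} be the monoid generated by v_i − v_j for i < j ≤ k, and Θ_{n,k} the monoid generated by v_i − v_j with i < j and k+1 ≤ j ≤ n. Then: (1) z' − z ∈ Φ_{n,k} implies z ≤_k z'; (2) z' − z ∈ Θ_{n,k} implies z ≥_k z'. -/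
/-- The map `φ^k : ℤ^n → ℤ^{n+1}`,
`φ^k(z) = (∑_{i≠k} z_i, ∑_{i=k+1}^n z_i, z₁, …, z_{k−1}, z_n, z_{n−1}, …, z_{k+1})`
(indices as in the paper, `2 ≤ k ≤ n`). -/
def phiMap (n k : ℕ) (hk1 : 2 ≤ k) (hkn : k ≤ n) (z : Fin n → ℤ) : Fin (n + 1) → ℤ :=
  fun j =>
    have hj : j.val < n + 1 := j.isLt
    if h0 : j.val = 0 then ∑ i ∈ Finset.univ.filter (fun i : Fin n => i.val + 1 ≠ k), z i
    else if h1 : j.val = 1 then ∑ i ∈ Finset.univ.filter (fun i : Fin n => k ≤ i.val), z i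
    else if h2 : j.val ≤ k then z ⟨j.val - 2, by omega⟩
    else z ⟨n + k - j.val, by omega⟩


private lemma phiMap_add (n k : ℕ) (hk1 : 2 ≤ k) (hkn : k ≤ n) (x y : Fin n → ℤ) :
    phiMap n k hk1 hkn (x + y) = phiMap n k hk1 hkn x + phiMap n k hk1 hkn y := by
  funext j
  simp only [phiMap, Pi.add_apply]
  split_ifs <;> simp [Finset.sum_add_distrib]

private lemma phiMap_zero (n k : ℕ) (hk1 : 2 ≤ k) (hkn : k ≤ n) :
    phiMap n k hk1 hkn 0 = 0 := by
  funext j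
  simp only [phiMap, Pi.zero_apply]
  split_ifs <;> simp

private lemma lex_pos {m : ℕ} (f : Fin m → ℤ) (i : Fin m)
    (h0 : ∀ j, j < i → f j = 0) (hi : 0 < f i) : (0 : Lex (Fin m → ℤ)) < toLex f :=
  ⟨i, fun j hj => (h0 j hj).symm, hi⟩

private lemma lex_neg {m : ℕ} (f : Fin m → ℤ) (i : Fin m)
    (h0 : ∀ j, j < i → f j = 0) (hi : f i < 0) : toLex f < (0 : Lex (Fin m → ℤ)) :=
  ⟨i, fun j hj => h0 j hj, hi⟩

private lemma sub_single_sum {n : ℕ} (a b : Fin n) {v : Fin n → ℤ}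
    (hv : v = Pi.single a (1:ℤ) - Pi.single b (1:ℤ)) (p : Fin n → Prop) [DecidablePred p] :
    ∑ i ∈ Finset.univ.filter p, v i
      = (if p a then 1 else 0) - (if p b then 1 else 0) := by
  subst hv
  simp [Pi.sub_apply, Finset.sum_sub_distrib, Pi.single_apply, Finset.sum_ite_eq',
    Finset.mem_filter]

private lemma sub_single_apply {n : ℕ} (a b : Fin n) {v : Fin n → ℤ}
    (hv : v = Pi.single a (1:ℤ) - Pi.single b (1:ℤ)) (i : Fin n) :
    v i = (if i = a then 1 else 0) - (if i = b then 1 else 0) := by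
  subst hv; simp [Pi.sub_apply, Pi.single_apply]

private lemma e0 (n k : ℕ) (hk1 : 2 ≤ k) (hkn : k ≤ n) (z : Fin n → ℤ) (h : (0:ℕ) < n + 1) :
    phiMap n k hk1 hkn z ⟨0, h⟩
      = ∑ i ∈ Finset.univ.filter (fun i : Fin n => i.val + 1 ≠ k), z i := by
  simp [phiMap]

private lemma e1 (n k : ℕ) (hk1 : 2 ≤ k) (hkn : k ≤ n) (z : Fin n → ℤ) (h : (1:ℕ) < n + 1) :
    phiMap n k hk1 hkn z ⟨1, h⟩
      = ∑ i ∈ Finset.univ.filter (fun i : Fin n => k ≤ i.val), z i := by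
  simp [phiMap]

private lemma emid (n k : ℕ) (hk1 : 2 ≤ k) (hkn : k ≤ n) (z : Fin n → ℤ) (jv : ℕ)
    (h2 : 2 ≤ jv) (hjk : jv ≤ k) (h : jv < n + 1) :
    phiMap n k hk1 hkn z ⟨jv, h⟩ = z ⟨jv - 2, by omega⟩ := by
  simp only [phiMap]
  rw [dif_neg (by omega), dif_neg (by omega), dif_pos hjk]

private lemma etail (n k : ℕ) (hk1 : 2 ≤ k) (hkn : k ≤ n) (z : Fin n → ℤ) (jv : ℕ)
    (hjk : k < jv) (h : jv < n + 1) :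
    phiMap n k hk1 hkn z ⟨jv, h⟩ = z ⟨n + k - jv, by omega⟩ := by
  simp only [phiMap]
  rw [dif_neg (by omega), dif_neg (by omega), dif_neg (by omega)]

private lemma gen1 {n k : ℕ} (hk1 : 2 ≤ k) (hkn : k ≤ n) {a b : Fin n} (hab : a < b)
    (hbk : b.val + 1 ≤ k) {v : Fin n → ℤ}
    (hv : v = Pi.single a (1:ℤ) - Pi.single b (1:ℤ)) :
    (0 : Lex (Fin (n+1) → ℤ)) ≤ toLex (phiMap n k hk1 hkn v) := by
  have hab' : a.val < b.val := hab
  apply le_of_lt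
  by_cases hbk' : b.val + 1 = k
  · refine lex_pos _ ⟨0, by omega⟩ (fun j hj => absurd hj (by simp [Fin.lt_def])) ?_
    rw [e0, sub_single_sum a b hv]
    split_ifs <;> omega
  · refine lex_pos _ ⟨a.val + 2, by omega⟩ ?_ ?_
    · rintro ⟨jv, hjlt⟩ hj
      rw [Fin.lt_def] at hj
      simp only at hj
      by_cases h0 : jv = 0
      · subst h0; rw [e0, sub_single_sum a b hv]; split_ifs <;> omega
      by_cases h1 : jv = 1
      · subst h1; rw [e1, sub_single_sum a b hv]; split_ifs <;> omega
      · rw [emid n k hk1 hkn v jv (by omega) (by omega), sub_single_apply a b hv]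
        simp only [Fin.ext_iff]
        split_ifs <;> omega
    · rw [emid n k hk1 hkn v (a.val + 2) (by omega) (by omega), sub_single_apply a b hv]
      simp only [Fin.ext_iff]
      split_ifs <;> omega

private lemma gen2 {n k : ℕ} (hk1 : 2 ≤ k) (hkn : k ≤ n) {a b : Fin n} (hab : a < b)
    (hbk : k ≤ b.val) {v : Fin n → ℤ}
    (hv : v = Pi.single a (1:ℤ) - Pi.single b (1:ℤ)) :
    toLex (phiMap n k hk1 hkn v) ≤ (0 : Lex (Fin (n+1) → ℤ)) := by
  have hab' : a.val < b.val := hab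
  have hbn : b.val < n := b.isLt
  apply le_of_lt
  by_cases hak : a.val + 1 = k
  · refine lex_neg _ ⟨0, by omega⟩ (fun j hj => absurd hj (by simp [Fin.lt_def])) ?_
    rw [e0, sub_single_sum a b hv]
    split_ifs <;> omega
  by_cases hak' : a.val < k
  · refine lex_neg _ ⟨1, by omega⟩ ?_ ?_
    · rintro ⟨jv, hjlt⟩ hj
      rw [Fin.lt_def] at hj
      simp only at hj
      have h0 : jv = 0 := by omega
      subst h0
      rw [e0, sub_single_sum a b hv]
      split_ifs <;> omega
    · rw [e1, sub_single_sum a b hv]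
      split_ifs <;> omega
  · have hka : k ≤ a.val := by omega
    refine lex_neg _ ⟨n + k - b.val, by omega⟩ ?_ ?_
    · rintro ⟨jv, hjlt⟩ hj
      rw [Fin.lt_def] at hj
      simp only at hj
      by_cases h0 : jv = 0
      · subst h0; rw [e0, sub_single_sum a b hv]; split_ifs <;> omega
      by_cases h1 : jv = 1
      · subst h1; rw [e1, sub_single_sum a b hv]; split_ifs <;> omega
      by_cases h2 : jv ≤ k
      · rw [emid n k hk1 hkn v jv (by omega) h2, sub_single_apply a b hv]
        simp only [Fin.ext_iff]
        split_ifs <;> omega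
      · rw [etail n k hk1 hkn v jv (by omega) (by omega), sub_single_apply a b hv]
        simp only [Fin.ext_iff]
        split_ifs <;> omega
    · rw [etail n k hk1 hkn v (n + k - b.val) (by omega) (by omega), sub_single_apply a b hv]
      simp only [Fin.ext_iff]
      split_ifs <;> omega

/-- Ordering `z ≤_k z'` by `φ^k(z) ≤_lex φ^k(z')`: if `z' − z` lies in
`Φ_{n,k} = ⟨v_i − v_j : i < j ≤ k⟩` then `z ≤_k z'`, and if `z' − z` lies in
`Θ_{n,k} = ⟨v_i − v_j : i < j, k+1 ≤ j ≤ n⟩` then `z ≥_k z'`. -/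
theorem stmt16 (n k : ℕ) (hk1 : 2 ≤ k) (hkn : k ≤ n) (z z' : Fin n → ℤ) :
    (z' - z ∈ AddSubmonoid.closure
        {v : Fin n → ℤ | ∃ a b : Fin n, a < b ∧ b.val + 1 ≤ k ∧
          v = Pi.single a (1 : ℤ) - Pi.single b (1 : ℤ)} →
      toLex (phiMap n k hk1 hkn z) ≤ toLex (phiMap n k hk1 hkn z')) ∧
    (z' - z ∈ AddSubmonoid.closure
        {v : Fin n → ℤ | ∃ a b : Fin n, a < b ∧ k ≤ b.val ∧
          v = Pi.single a (1 : ℤ) - Pi.single b (1 : ℤ)} →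
      toLex (phiMap n k hk1 hkn z') ≤ toLex (phiMap n k hk1 hkn z)) := by
  have hz' : phiMap n k hk1 hkn z' = phiMap n k hk1 hkn z + phiMap n k hk1 hkn (z' - z) := by
    rw [← phiMap_add, add_sub_cancel]
  constructor
  · intro h
    have key : (0 : Lex (Fin (n+1) → ℤ)) ≤ toLex (phiMap n k hk1 hkn (z' - z)) := by
      refine AddSubmonoid.closure_induction (fun x hx => ?_) ?_ (fun x y _ _ px py => ?_) h
      · obtain ⟨a, b, hab, hbk, hveq⟩ := hx
        exact gen1 hk1 hkn hab hbk hveq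
      · rw [phiMap_zero]; exact le_rfl
      · rw [phiMap_add]
        exact add_nonneg px py
    calc toLex (phiMap n k hk1 hkn z)
        ≤ toLex (phiMap n k hk1 hkn z) + toLex (phiMap n k hk1 hkn (z' - z)) :=
          le_add_of_nonneg_right key
      _ = toLex (phiMap n k hk1 hkn z') := by rw [hz']; rfl
  · intro h
    have key : toLex (phiMap n k hk1 hkn (z' - z)) ≤ (0 : Lex (Fin (n+1) → ℤ)) := by
      refine AddSubmonoid.closure_induction (fun x hx => ?_) ?_ (fun x y _ _ px py => ?_) h
      · obtain ⟨a, b, hab, hbk, hveq⟩ := hx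
        exact gen2 hk1 hkn hab hbk hveq
      · rw [phiMap_zero]; exact le_rfl
      · rw [phiMap_add]
        exact add_nonpos px py
    calc toLex (phiMap n k hk1 hkn z')
        = toLex (phiMap n k hk1 hkn z) + toLex (phiMap n k hk1 hkn (z' - z)) := by rw [hz']; rfl
      _ ≤ toLex (phiMap n k hk1 hkn z) := add_le_of_nonpos_right key
end

section
/- For compositions λ, μ ∈ Λ(n,r) with λ ⊵ μ, the map t sending a pair (i,j) of multi-indices in I(n,r) with i ≤ j, wt(i) = λ, wt(j) = μ to the matrix t(i,j)_{σρ} = #{τ : i_τ = σ, j_τ = ρ} induces a bijection between the Σ_r-orbits Ω(λ,μ) = {(i,j) : i ≤ j, wt(i)=λ, wt(j)=μ}/Σ_r and the set T(λ,μ) of upper-triangular n×n matrices K over N with row sums ∑_{ρ≥σ} k_{σρ} = λ_σ and column sums ∑_{σ≤ρ} k_{σρ} = μ_ρ. -/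
/-- The weight of a multi-index `i ∈ I(n,r)`: `wt(i)_ν = #{ρ : i_ρ = ν}`. -/
def wtOf {n r : ℕ} (i : Fin r → Fin n) : Fin n → ℕ :=
  fun ν => (Finset.univ.filter fun ρ => i ρ = ν).card

/-! The matrix `t(i,j)` counts the fibres of `τ ↦ (i_τ, j_τ)`. Two maps out of a finite set
differ by a permutation of the source exactly when their fibres have the same sizes, so `t`
separates the `Σ_r`-orbits, and every `ℕ`-matrix of total sum `r` arises as such a fibre count.
The condition `i ≤ j` says precisely that `t(i,j)` is upper triangular, and then its row and
column sums are `wt(i)` and `wt(j)`. -/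

open Finset

theorem exists_perm_comp_eq_of_card_fiber_eq {ι X : Type*} [Fintype ι] [DecidableEq X]
    {f g : ι → X} (h : ∀ x, #{τ | f τ = x} = #{τ | g τ = x}) :
    ∃ π : Equiv.Perm ι, ∀ τ, f (π τ) = g τ := by
  have e : ∀ x, {τ // g τ = x} ≃ {τ // f τ = x} := fun x =>
    Fintype.equivOfCardEq (by simp only [Fintype.card_subtype, h])
  exact ⟨Equiv.ofFiberEquiv e, Equiv.ofFiberEquiv_map e⟩

theorem exists_fin_card_fiber_eq {X : Type*} [Fintype X] [DecidableEq X] {r : ℕ}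
    (w : X → ℕ) (hw : ∑ x, w x = r) :
    ∃ f : Fin r → X, ∀ x, #{τ | f τ = x} = w x := by
  let e : (Σ x, Fin (w x)) ≃ Fin r := Fintype.equivOfCardEq (by simp [hw])
  refine ⟨fun τ => (e.symm τ).1, fun x => ?_⟩
  calc #{τ | (e.symm τ).1 = x}
      = Fintype.card {s : Σ y, Fin (w y) // s.1 = x} := by
        rw [← Fintype.card_subtype]
        exact Fintype.card_congr (e.symm.subtypeEquiv fun _ => Iff.rfl)
    _ = w x := by
        rw [Fintype.card_congr (Equiv.sigmaSubtype x), Fintype.card_fin]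

theorem Matrix.IsUpperTriangular.sum_row_filter_le {α M : Type*} [Fintype α] [LinearOrder α]
    [AddCommMonoid M] {K : Matrix α α M} (hK : K.IsUpperTriangular) (i : α) :
    ∑ j with i ≤ j, K i j = ∑ j, K i j :=
  sum_filter_of_ne fun _ _ hj => not_lt.1 fun hji => hj (hK hji)

theorem Matrix.IsUpperTriangular.sum_col_filter_le {α M : Type*} [Fintype α] [LinearOrder α]
    [AddCommMonoid M] {K : Matrix α α M} (hK : K.IsUpperTriangular) (j : α) :
    ∑ i with i ≤ j, K i j = ∑ i, K i j :=
  sum_filter_of_ne fun _ _ hi => not_lt.1 fun hji => hi (hK hji)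

section pairCount

variable {ι α β : Type*} [Fintype ι] [DecidableEq α] [DecidableEq β]

def pairCount (f : ι → α) (g : ι → β) : Matrix α β ℕ :=
  fun a b => #{τ | f τ = a ∧ g τ = b}

theorem pairCount_apply_eq_card_fiber (f : ι → α) (g : ι → β) (a : α) (b : β) :
    pairCount f g a b = #{τ | (f τ, g τ) = (a, b)} := by
  simp only [pairCount, Prod.mk.injEq]

theorem pairCount_swap (f : ι → α) (g : ι → β) : pairCount g f = (pairCount f g).transpose := by
  ext b a
  simp only [pairCount, Matrix.transpose_apply, and_comm]

theorem sum_pairCount_row (f : ι → α) (g : ι → β) [Fintype β] (a : α) :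
    ∑ b, pairCount f g a b = #{τ | f τ = a} := by
  rw [card_eq_sum_card_fiberwise (f := g) (t := univ) fun _ _ => mem_univ _]
  simp only [pairCount, filter_filter]

theorem sum_pairCount_col (f : ι → α) (g : ι → β) [Fintype α] (b : β) :
    ∑ a, pairCount f g a b = #{τ | g τ = b} := by
  simpa only [pairCount_swap f g, Matrix.transpose_apply] using sum_pairCount_row g f b

theorem exists_perm_iff_pairCount_eq {f f' : ι → α} {g g' : ι → β} :
    (∃ π : Equiv.Perm ι, (∀ τ, f (π τ) = f' τ) ∧ ∀ τ, g (π τ) = g' τ) ↔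
      pairCount f g = pairCount f' g' := by
  constructor
  · rintro ⟨π, hf, hg⟩
    ext a b
    exact card_equiv π.symm fun τ => by simp [← hf, ← hg]
  · intro h
    obtain ⟨π, hπ⟩ := exists_perm_comp_eq_of_card_fiber_eq (f := fun τ => (f τ, g τ))
      (g := fun τ => (f' τ, g' τ)) fun x => by
        simpa only [pairCount_apply_eq_card_fiber] using congrFun₂ h x.1 x.2
    exact ⟨π, fun τ => congrArg Prod.fst (hπ τ), fun τ => congrArg Prod.snd (hπ τ)⟩

theorem exists_pairCount_eq [Fintype α] [Fintype β] {r : ℕ} (K : Matrix α β ℕ)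
    (hK : ∑ a, ∑ b, K a b = r) : ∃ f : Fin r → α, ∃ g : Fin r → β, pairCount f g = K := by
  obtain ⟨c, hc⟩ := exists_fin_card_fiber_eq (r := r) (fun x : α × β => K x.1 x.2)
    (by rwa [Fintype.sum_prod_type])
  exact ⟨fun τ => (c τ).1, fun τ => (c τ).2, by
    ext a b
    simpa only [pairCount_apply_eq_card_fiber] using hc (a, b)⟩

theorem pairCount_isUpperTriangular_iff [LinearOrder α] {f g : ι → α} :
    (pairCount f g).IsUpperTriangular ↔ ∀ τ, f τ ≤ g τ := by
  constructor
  · intro h τ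
    by_contra! hlt
    have hτ : τ ∈ ({σ | f σ = f τ ∧ g σ = g τ} : Finset ι) := by simp
    exact (card_ne_zero_of_mem hτ) (h hlt)
  · intro h a b hba
    refine card_eq_zero.2 (filter_eq_empty_iff.2 ?_)
    rintro τ - ⟨rfl, rfl⟩
    exact (h τ).not_gt hba

end pairCount

theorem pairCount_sums_iff {ι α : Type*} [Fintype ι] [Fintype α] [LinearOrder α]
    {f g : ι → α} (hfg : ∀ τ, f τ ≤ g τ) (lam mu : α → ℕ) :
    ((∀ σ, ∑ ρ with σ ≤ ρ, pairCount f g σ ρ = lam σ) ∧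
        ∀ ρ, ∑ σ with σ ≤ ρ, pairCount f g σ ρ = mu ρ) ↔
      (∀ σ, #{τ | f τ = σ} = lam σ) ∧ ∀ ρ, #{τ | g τ = ρ} = mu ρ := by
  have hK := pairCount_isUpperTriangular_iff.2 hfg
  simp only [hK.sum_row_filter_le, hK.sum_col_filter_le, sum_pairCount_row, sum_pairCount_col]

theorem stmt17_general (n r : ℕ) (lam mu : Fin n → ℕ)
    (hlam : ∑ ν, lam ν = r) :
    ∃ F : Quot (fun p q : {p : (Fin r → Fin n) × (Fin r → Fin n) //
          (∀ σ, p.1 σ ≤ p.2 σ) ∧ wtOf p.1 = lam ∧ wtOf p.2 = mu} =>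
        ∃ π : Equiv.Perm (Fin r), (∀ σ, p.1.1 (π σ) = q.1.1 σ) ∧
          (∀ σ, p.1.2 (π σ) = q.1.2 σ)) ≃
      {Km : Matrix (Fin n) (Fin n) ℕ //
        (∀ σ ρ : Fin n, ρ < σ → Km σ ρ = 0) ∧
        (∀ σ : Fin n, ∑ ρ ∈ Finset.univ.filter (fun ρ => σ ≤ ρ), Km σ ρ = lam σ) ∧
        (∀ ρ : Fin n, ∑ σ ∈ Finset.univ.filter (fun σ => σ ≤ ρ), Km σ ρ = mu ρ)},
      ∀ p, (F (Quot.mk _ p) : Matrix (Fin n) (Fin n) ℕ) =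
        fun σ ρ => (Finset.univ.filter fun τ => p.1.1 τ = σ ∧ p.1.2 τ = ρ).card := by
  refine ⟨(Quot.congrRight fun p q => ?_).trans (Setoid.quotientKerEquivOfSurjective
    (fun p => ⟨pairCount p.1.1 p.1.2, fun _ _ h => pairCount_isUpperTriangular_iff.2 p.2.1 h,
      (pairCount_sums_iff p.2.1 lam mu).2 ⟨congrFun p.2.2.1, congrFun p.2.2.2⟩⟩) ?_), fun _ => rfl⟩
  · rw [Setoid.ker_def, Subtype.ext_iff]
    exact exists_perm_iff_pairCount_eq
  · rintro ⟨K, hlow, hrow, hcol⟩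
    have hK : K.IsUpperTriangular := fun _ _ => hlow _ _
    obtain ⟨f, g, rfl⟩ := exists_pairCount_eq K (r := r) <| by
      simp only [← hK.sum_row_filter_le, hrow, hlam]
    have hfg := pairCount_isUpperTriangular_iff.1 hK
    obtain ⟨hf, hg⟩ := (pairCount_sums_iff hfg lam mu).1 ⟨hrow, hcol⟩
    exact ⟨⟨(f, g), hfg, funext hf, funext hg⟩, rfl⟩

/-- For `λ ⊵ μ`, the map `t(i,j)_{σρ} = #{τ : i_τ = σ, j_τ = ρ}` induces a bijection
between `Ω(λ,μ)` — the `Σ_r`-orbits of pairs `(i,j)` with `i ≤ j`, `wt(i) = λ`,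
`wt(j) = μ` — and the set `T(λ,μ)` of upper-triangular `ℕ`-matrices with row sums `λ`
and column sums `μ`. -/
theorem stmt17 (n r : ℕ) (lam mu : Fin n → ℕ)
    (hlam : ∑ ν, lam ν = r) (hmu : ∑ ν, mu ν = r)
    (hdom : ∀ j : Fin n, ∑ i ∈ Finset.Iic j, mu i ≤ ∑ i ∈ Finset.Iic j, lam i) :
    ∃ F : Quot (fun p q : {p : (Fin r → Fin n) × (Fin r → Fin n) //
          (∀ σ, p.1 σ ≤ p.2 σ) ∧ wtOf p.1 = lam ∧ wtOf p.2 = mu} =>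
        ∃ π : Equiv.Perm (Fin r), (∀ σ, p.1.1 (π σ) = q.1.1 σ) ∧
          (∀ σ, p.1.2 (π σ) = q.1.2 σ)) ≃
      {Km : Matrix (Fin n) (Fin n) ℕ //
        (∀ σ ρ : Fin n, ρ < σ → Km σ ρ = 0) ∧
        (∀ σ : Fin n, ∑ ρ ∈ Finset.univ.filter (fun ρ => σ ≤ ρ), Km σ ρ = lam σ) ∧
        (∀ ρ : Fin n, ∑ σ ∈ Finset.univ.filter (fun σ => σ ≤ ρ), Km σ ρ = mu ρ)},
      ∀ p, (F (Quot.mk _ p) : Matrix (Fin n) (Fin n) ℕ) =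
        fun σ ρ => (Finset.univ.filter fun τ => p.1.1 τ = σ ∧ p.1.2 τ = ρ).card :=
  stmt17_general n r lam mu hlam
end
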